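/- arXiv:1609.07183 — 11 statements merged into one kernel-verified Lean document; each statement's English description precedes it below -/
import Mathlib

section
/- Let F be a finite field with q elements, let n ≥ 1, and let C be an F-linear subspace of the space of vectors Fin n → F that is closed under the cyclic shift σ (where σ(v)_i = v_{(i+1) mod n}). If C contains exactly q − 1 vectors of full Hamming weight n, then there exists a unique u ∈ F with u ≠ 0 and u^n = 1 such that the set of vectors of C of Hamming weight n is exactly { (λ·u^i)_{i=0}^{n−1} : λ ∈ F, λ ≠ 0 }. -/
/-!
If `c₀` is a full-weight word of `C`, its `q - 1` nonzero multiples are full-weight words, so by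
the count they are all of them. In particular the cyclic shift of `c₀` is `u • c₀` for some `u`;
reading this off entry by entry makes `c₀` a multiple of the geometric word `(uⁱ)ᵢ`, and going
once around the cycle gives `uⁿ = 1`. Conversely `u` is recovered from the geometric word as its
eigenvalue under the shift, which gives uniqueness.
-/

theorem hammingNorm_eq_card_iff {ι : Type*} [Fintype ι] {β : ι → Type*} [∀ i, Zero (β i)]
    [∀ i, DecidableEq (β i)] {x : ∀ i, β i} :
    hammingNorm x = Fintype.card ι ↔ ∀ i, x i ≠ 0 := by
  rw [hammingNorm, ← Finset.card_univ, Finset.card_filter_eq_iff]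
  simp

section Multiples

variable {F ι : Type*} [Field F]

def nonzeroMultiples (w : ι → F) : Set (ι → F) := {c | ∃ a : F, a ≠ 0 ∧ c = a • w}

theorem nonzeroMultiples_smul {a : F} (ha : a ≠ 0) (w : ι → F) :
    nonzeroMultiples (a • w) = nonzeroMultiples w := by
  ext c
  constructor
  · rintro ⟨b, hb, rfl⟩
    exact ⟨b * a, mul_ne_zero hb ha, (mul_smul b a w).symm⟩
  · rintro ⟨b, hb, rfl⟩
    exact ⟨b * a⁻¹, mul_ne_zero hb (inv_ne_zero ha), by rw [smul_smul, inv_mul_cancel_right₀ ha]⟩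

theorem ncard_nonzeroMultiples [Fintype F] {w : ι → F} (hw : w ≠ 0) :
    (nonzeroMultiples w).ncard = Fintype.card F - 1 := by
  have : nonzeroMultiples w = (fun a : F => a • w) '' {0}ᶜ := by
    ext c
    simp only [nonzeroMultiples, Set.mem_image, Set.mem_ofPred_eq, Set.mem_compl_singleton_iff,
      eq_comm]
  rw [this, Set.ncard_image_of_injective _ (smul_left_injective F hw), Set.ncard_compl,
    Set.ncard_singleton, Nat.card_eq_fintype_card]

def fullWeightWords (C : Submodule F (ι → F)) : Set (ι → F) := {c | c ∈ C ∧ ∀ i, c i ≠ 0}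

theorem nonzeroMultiples_subset_fullWeightWords {C : Submodule F (ι → F)} {w : ι → F}
    (hw : w ∈ fullWeightWords C) : nonzeroMultiples w ⊆ fullWeightWords C := by
  rintro _ ⟨a, ha, rfl⟩
  exact ⟨C.smul_mem a hw.1, fun i => mul_ne_zero ha (hw.2 i)⟩

theorem fullWeightWords_eq_nonzeroMultiples [Fintype F] [Fintype ι] [Nonempty ι]
    {C : Submodule F (ι → F)} {w : ι → F} (hw : w ∈ fullWeightWords C)
    (hcard : (fullWeightWords C).ncard ≤ Fintype.card F - 1) :
    fullWeightWords C = nonzeroMultiples w := by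
  have hw₀ : w ≠ 0 := fun h => hw.2 (Classical.arbitrary ι) (by simp [h])
  refine (Set.eq_of_subset_of_ncard_le (nonzeroMultiples_subset_fullWeightWords hw) ?_
    (Set.toFinite _)).symm
  rwa [ncard_nonzeroMultiples hw₀]

end Multiples

section CyclicShift

variable {M : Type*} {n : ℕ}

def cyclicShift {α : Type*} (c : Fin n → α) : Fin n → α :=
  fun i => c ⟨(i + 1) % n, Nat.mod_lt _ i.pos⟩

def geomWord [Monoid M] (n : ℕ) (u : M) : Fin n → M := fun i => u ^ (i : ℕ)

theorem cyclicShift_smul {α : Type*} [SMul M α] (a : M) (c : Fin n → α) :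
    cyclicShift (a • c) = a • cyclicShift c := rfl

theorem cyclicShift_geomWord [Monoid M] {u : M} (hu : u ^ n = 1) :
    cyclicShift (geomWord n u) = u • geomWord n u := by
  funext i
  simp only [cyclicShift, geomWord, Pi.smul_apply, smul_eq_mul]
  rw [← pow_eq_pow_mod _ hu, pow_succ']

theorem apply_mod_eq_pow_mul_of_cyclicShift_eq_smul [Monoid M] (hn : 0 < n) {c : Fin n → M}
    {u : M} (h : cyclicShift c = u • c) (k : ℕ) :
    c ⟨k % n, Nat.mod_lt k hn⟩ = u ^ k * c ⟨0, hn⟩ := by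
  induction k with
  | zero => simp
  | succ k ih =>
    have step := congrFun h ⟨k % n, Nat.mod_lt k hn⟩
    simp only [cyclicShift, Pi.smul_apply, smul_eq_mul] at step
    rw [pow_succ', mul_assoc, ← ih, ← step]
    simp [Nat.add_mod]

theorem eq_smul_geomWord_of_cyclicShift_eq_smul [CommMonoid M] (hn : 0 < n) {c : Fin n → M}
    {u : M} (h : cyclicShift c = u • c) : c = c ⟨0, hn⟩ • geomWord n u := by
  funext i
  have := apply_mod_eq_pow_mul_of_cyclicShift_eq_smul hn h i
  simp only [Nat.mod_eq_of_lt i.2] at this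
  simp [geomWord, this, mul_comm]

theorem pow_eq_one_of_cyclicShift_eq_smul [CommMonoidWithZero M] [IsRightCancelMulZero M]
    (hn : 0 < n) {c : Fin n → M} {u : M} (h : cyclicShift c = u • c) (h₀ : c ⟨0, hn⟩ ≠ 0) : u ^ n = 1 := by
  have := apply_mod_eq_pow_mul_of_cyclicShift_eq_smul hn h n
  simp only [Nat.mod_self] at this
  exact (mul_eq_right₀ h₀).1 this.symm

theorem eq_of_geomWord_mem_nonzeroMultiples {F : Type*} [Field F] (hn : 0 < n) {u v : F}
    (hu : u ^ n = 1) (hv : v ^ n = 1) (h : geomWord n v ∈ nonzeroMultiples (geomWord n u)) :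
    v = u := by
  obtain ⟨a, -, ha⟩ := h
  have hv₀ : geomWord n v ≠ 0 := fun h => by simpa [geomWord] using congrFun h ⟨0, hn⟩
  refine smul_left_injective F hv₀ ?_
  change v • geomWord n v = u • geomWord n v
  rw [← cyclicShift_geomWord hv, ha, cyclicShift_smul, cyclicShift_geomWord hu, smul_comm]

end CyclicShift

/-- If a cyclic (shift-invariant) linear code `C ⊆ Fⁿ` over a finite field `F` with `q`
elements contains exactly `q − 1` vectors of full Hamming weight `n`, then there is a
unique `u ∈ F`, `u ≠ 0`, `u^n = 1`, such that the full-weight vectors of `C` are exactly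
the vectors `(λ·u^i)_{i=0}^{n−1}` with `λ ≠ 0`. -/
theorem full_weight_words_of_cyclic_code
    (F : Type*) [Field F] [Fintype F] [DecidableEq F] (q n : ℕ)
    (hq : Fintype.card F = q) (hn : 1 ≤ n)
    (C : Submodule F (Fin n → F))
    (hshift : ∀ c ∈ C,
      (fun i : Fin n => c ⟨((i : ℕ) + 1) % n, Nat.mod_lt _ (by omega)⟩) ∈ C)
    (hcount : {c : Fin n → F | c ∈ C ∧ hammingNorm c = n}.ncard = q - 1) :
    ∃! u : F, u ≠ 0 ∧ u ^ n = 1 ∧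
      {c : Fin n → F | c ∈ C ∧ hammingNorm c = n}
        = {c : Fin n → F | ∃ lam : F, lam ≠ 0 ∧ c = fun i : Fin n => lam * u ^ (i : ℕ)} := by
  have hfull : {c : Fin n → F | c ∈ C ∧ hammingNorm c = n} = fullWeightWords C := by
    ext c
    simp [fullWeightWords, ← hammingNorm_eq_card_iff]
  rw [hfull] at hcount ⊢
  have : Nonempty (Fin n) := ⟨⟨0, hn⟩⟩
  obtain ⟨c₀, hc₀⟩ : (fullWeightWords C).Nonempty := by
    have : 1 < q := hq ▸ Fintype.one_lt_card
    exact Set.nonempty_of_ncard_ne_zero (by omega)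
  have hC : fullWeightWords C = nonzeroMultiples c₀ :=
    fullWeightWords_eq_nonzeroMultiples hc₀ (hq ▸ hcount.le)
  obtain ⟨u, -, hshift₀⟩ : cyclicShift c₀ ∈ nonzeroMultiples c₀ :=
    hC ▸ ⟨hshift c₀ hc₀.1, fun _ => hc₀.2 _⟩
  have hc₀0 : c₀ ⟨0, hn⟩ ≠ 0 := hc₀.2 _
  have hu : u ^ n = 1 := pow_eq_one_of_cyclicShift_eq_smul hn hshift₀ hc₀0
  have hgeom : fullWeightWords C = nonzeroMultiples (geomWord n u) := by
    rw [hC, eq_smul_geomWord_of_cyclicShift_eq_smul hn hshift₀, nonzeroMultiples_smul hc₀0]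
  refine ⟨u, ⟨(pow_ne_zero_iff (by omega)).1 (hu ▸ one_ne_zero), hu, hgeom⟩, ?_⟩
  rintro v ⟨-, hv, hvC⟩
  refine eq_of_geomWord_mem_nonzeroMultiples hn hu hv ?_
  rw [← hgeom, hvC]
  exact ⟨1, one_ne_zero, funext fun i => (one_mul _).symm⟩
end

section
/- Let q be a prime power, k ≥ 1 an integer, γ a fixed primitive element of F_{q^k}, and e a nonnegative integer. For a ∈ F_{q^k} let w(a) = #{ i : 0 ≤ i < q^k − 1, Tr(a·γ^{e·i}) ≠ 0 }. If the set W = { w(a) : a ∈ F_{q^k}, a ≠ 0 } \ {0} has exactly two elements w₁ and w₂, then w₁ − w₂ ≠ 1 and w₂ − w₁ ≠ 1 (that is, the two nonzero weights of a two-weight irreducible cyclic code of length q^k − 1 over F_q never differ by 1). -/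
/-!
Write `u = γ^e` and index the code by `i ∈ ℤ/n`, `n = q^k − 1`, via `ψ i = u^i`. The indices `t`
with `u^t ∈ F_q^*` form a subgroup `T`, and since the trace is `F_q`-linear the support of every
codeword is a union of cosets of `T`, so `#T` divides every weight. If `T` is trivial then `ψ` is
injective, hence a bijection onto `F_{q^k}^*`, and multiplying `a` by a unit merely translates the
support: the code has a single nonzero weight. Otherwise both weights are multiples of `#T ≥ 2`.
-/

theorem Subgroup.card_dvd_ncard_of_mul_mem {G : Type*} [Group G] (T : Subgroup G) {S : Set G}
    (hS : ∀ x ∈ S, ∀ t ∈ T, x * t ∈ S) : Nat.card T ∣ S.ncard := by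
  have hsat : S = QuotientGroup.mk ⁻¹' (QuotientGroup.mk '' S : Set (G ⧸ T)) := by
    refine Set.Subset.antisymm (fun y hy => ⟨y, hy, rfl⟩) ?_
    rintro y ⟨x, hx, hxy⟩
    simpa using hS x hx _ (QuotientGroup.eq.mp hxy)
  rw [hsat, ← Nat.card_coe_set_eq, QuotientGroup.card_preimage_mk]
  exact dvd_mul_right _ _

theorem ZMod.ncard_setOf_natCast {n : ℕ} [NeZero n] (p : ZMod n → Prop) :
    {i : ℕ | i < n ∧ p i}.ncard = {x : ZMod n | p x}.ncard := by
  have himage : (Nat.cast '' {i : ℕ | i < n ∧ p i} : Set (ZMod n)) = {x | p x} := by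
    refine Set.Subset.antisymm (by rintro _ ⟨i, ⟨-, hi⟩, rfl⟩; exact hi) fun x hx => ?_
    exact ⟨x.val, ⟨x.val_lt, by rwa [ZMod.natCast_zmod_val]⟩, ZMod.natCast_zmod_val x⟩
  rw [← himage, Set.InjOn.ncard_image]
  intro i hi j hj hij
  simpa [ZMod.val_natCast_of_lt hi.1, ZMod.val_natCast_of_lt hj.1] using congrArg ZMod.val hij

theorem ZMod.exists_monoidHom_ofAdd_natCast {M : Type*} [Group M] {n : ℕ} {u : M}
    (hu : u ^ n = 1) :
    ∃ ψ : Multiplicative (ZMod n) →* M, ∀ i : ℕ, ψ (Multiplicative.ofAdd i) = u ^ i := by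
  let f : {f : ℤ →+ Additive M // f n = 0} :=
    ⟨zmultiplesHom (Additive M) (Additive.ofMul u), by simp [← ofMul_pow, hu]⟩
  refine ⟨AddMonoidHom.toMultiplicativeLeft (ZMod.lift n f), fun i => ?_⟩
  simpa [f] using congrArg Additive.toMul (ZMod.lift_coe n f i)

section TraceSupport

variable (F : Type*) {E G : Type*} [Field F] [Field E] [Algebra F E] [Group G]

def scalarPreimage (ψ : G →* Eˣ) : Subgroup G :=
  (Units.map (algebraMap F E : F →* E)).range.comap ψ

/-- For `G = Multiplicative (ZMod n)` and `ψ i = u ^ i` this is the support of the codeword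
`(Tr (a u^i))ᵢ`. -/
def traceSupport (a : E) (ψ : G →* Eˣ) : Set G :=
  {g | Algebra.trace F E (a * ψ g) ≠ 0}

variable {F}

theorem mul_mem_traceSupport {a : E} {ψ : G →* Eˣ} {g t : G} (hg : g ∈ traceSupport F a ψ)
    (ht : t ∈ scalarPreimage F ψ) : g * t ∈ traceSupport F a ψ := by
  obtain ⟨c, hc⟩ := ht
  have : a * ψ (g * t) = (c : F) • (a * ψ g) := by
    rw [map_mul, ← hc, Algebra.smul_def]
    simp only [Units.val_mul, Units.coe_map, MonoidHom.coe_coe]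
    ring
  simp only [traceSupport, Set.mem_ofPred_eq, this, map_smul]
  exact smul_ne_zero c.ne_zero hg

theorem card_scalarPreimage_dvd_ncard_traceSupport (a : E) (ψ : G →* Eˣ) :
    Nat.card (scalarPreimage F ψ) ∣ (traceSupport F a ψ).ncard :=
  (scalarPreimage F ψ).card_dvd_ncard_of_mul_mem fun _ hg _ ht => mul_mem_traceSupport hg ht

theorem ncard_traceSupport_eq_of_bijective {ψ : G →* Eˣ} (hψ : Function.Bijective ψ)
    (a b : Eˣ) : (traceSupport F (a : E) ψ).ncard = (traceSupport F (b : E) ψ).ncard := by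
  obtain ⟨g₀, hg₀⟩ := hψ.2 (a⁻¹ * b)
  have hshift : ∀ g, (a : E) * ψ (g * g₀) = b * ψ g := fun g => by
    rw [map_mul, hg₀]
    push_cast
    field_simp
  have : traceSupport F (b : E) ψ = (· * g₀) ⁻¹' traceSupport F (a : E) ψ := by
    ext g
    simp only [traceSupport, Set.mem_preimage, Set.mem_ofPred_eq, hshift]
  rw [this, Set.ncard_preimage_of_injective_subset_range (mul_left_injective g₀)
    fun x _ => (Equiv.mulRight g₀).surjective x]

theorem bijective_of_scalarPreimage_eq_bot [Finite E] {ψ : G →* Eˣ}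
    (hT : scalarPreimage F ψ = ⊥) (hcard : Nat.card Eˣ ≤ Nat.card G) : Function.Bijective ψ := by
  refine Function.Injective.bijective_of_nat_card_le ((MonoidHom.ker_eq_bot_iff ψ).mp ?_) hcard
  rw [eq_bot_iff, ← hT]
  intro g hg
  exact ⟨1, by simpa using hg.symm⟩

theorem exists_dvd_ncard_traceSupport_or_eq [Finite E] (ψ : G →* Eˣ)
    (hcard : Nat.card Eˣ ≤ Nat.card G) :
    (∃ d ≠ 1, ∀ a : E, d ∣ (traceSupport F a ψ).ncard) ∨
      ∀ a b : Eˣ, (traceSupport F (a : E) ψ).ncard = (traceSupport F (b : E) ψ).ncard := by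
  by_cases hT : scalarPreimage F ψ = ⊥
  · exact .inr (ncard_traceSupport_eq_of_bijective (bijective_of_scalarPreimage_eq_bot hT hcard))
  · exact .inl ⟨_, Subgroup.card_eq_one.not.mpr hT,
      fun a => card_scalarPreimage_dvd_ncard_traceSupport a ψ⟩

end TraceSupport

theorem Nat.ne_add_one_of_dvd_of_dvd {d m n : ℕ} (hd : d ≠ 1) (hm : d ∣ m) (hn : d ∣ n) :
    m ≠ n + 1 := by
  rintro rfl
  exact hd (Nat.dvd_one.mp ((Nat.dvd_add_right hn).mp hm))

theorem two_weight_irreducible_cyclic_weights_ne_succ_general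
    (q k : ℕ)
    (F E : Type*) [Field F] [Field E] [Fintype E] [Algebra F E]
    (hE : Fintype.card E = q ^ k)
    (γ : Eˣ)
    (e : ℕ) (w : E → ℕ)
    (hw : ∀ a : E, w a =
      {i : ℕ | i < q ^ k - 1 ∧ Algebra.trace F E (a * (γ : E) ^ (e * i)) ≠ 0}.ncard)
    (w₁ w₂ : ℕ)
    (hW : {m : ℕ | ∃ a : E, a ≠ 0 ∧ w a = m} \ {0} = {w₁, w₂}) :
    w₁ ≠ w₂ + 1 ∧ w₂ ≠ w₁ + 1 := by
  set n := q ^ k - 1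
  have hcard : Nat.card Eˣ = n := by rw [Nat.card_units, Nat.card_eq_fintype_card, hE]
  have : NeZero n := ⟨hcard ▸ Nat.card_pos.ne'⟩
  obtain ⟨ψ, hψ⟩ := ZMod.exists_monoidHom_ofAdd_natCast (u := γ ^ e) (n := n)
    (by rw [← hcard, pow_card_eq_one'])
  have hwψ : ∀ a, w a = (traceSupport F a ψ).ncard := fun a => by
    have := ZMod.ncard_setOf_natCast fun x : ZMod n =>
      Algebra.trace F E (a * ψ (Multiplicative.ofAdd x)) ≠ 0
    simp only [hψ, Units.val_pow_eq_pow_val, ← pow_mul] at this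
    rw [hw a]
    exact this
  have hattained : ∀ m ∈ ({w₁, w₂} : Set ℕ), ∃ a : Eˣ, w a = m := by
    rintro m hm
    obtain ⟨⟨a, ha, rfl⟩, -⟩ := hW.symm.subset hm
    exact ⟨Units.mk0 a ha, rfl⟩
  obtain ⟨a₁, rfl⟩ := hattained w₁ (by simp)
  obtain ⟨a₂, rfl⟩ := hattained w₂ (by simp)
  rcases exists_dvd_ncard_traceSupport_or_eq (F := F) ψ (by simp [hcard]) with
    ⟨d, hd, hdvd⟩ | hconst
  · simp only [hwψ]
    exact ⟨Nat.ne_add_one_of_dvd_of_dvd hd (hdvd _) (hdvd _),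
      Nat.ne_add_one_of_dvd_of_dvd hd (hdvd _) (hdvd _)⟩
  · rw [hwψ, hwψ, hconst a₁ a₂]
    omega

/-- The two nonzero weights of a two-weight irreducible cyclic code of length `q^k − 1`
over `F_q` never differ by `1`. -/
theorem two_weight_irreducible_cyclic_weights_ne_succ
    (q k : ℕ) (hk : 1 ≤ k)
    (F E : Type*) [Field F] [Fintype F] [Field E] [Fintype E] [Algebra F E]
    (hq : Fintype.card F = q) (hE : Fintype.card E = q ^ k)
    (γ : Eˣ) (hγ : ∀ x : Eˣ, x ∈ Subgroup.zpowers γ)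
    (e : ℕ) (w : E → ℕ)
    (hw : ∀ a : E, w a =
      {i : ℕ | i < q ^ k - 1 ∧ Algebra.trace F E (a * (γ : E) ^ (e * i)) ≠ 0}.ncard)
    (w₁ w₂ : ℕ) (hne : w₁ ≠ w₂)
    (hW : {m : ℕ | ∃ a : E, a ≠ 0 ∧ w a = m} \ {0} = {w₁, w₂}) :
    w₁ ≠ w₂ + 1 ∧ w₂ ≠ w₁ + 1 :=
  two_weight_irreducible_cyclic_weights_ne_succ_general q k F E hE γ e w hw w₁ w₂ hW
end

section
/- Let q ≥ 2 and k ≥ 1 be integers, Δ = (q^k − 1)/(q − 1), and let e₂, α, β be integers with 0 ≤ α < q^k − 1, 0 ≤ β < q − 1 and e₂·α + Δ·β ≡ 1 (mod q^k − 1). Then the map Ψ from V = { (v, w) ∈ ℤ² : 0 ≤ v < q^k − 1, 0 ≤ w < q − 1 } to itself defined by Ψ(v, w) = ( (α·v + Δ·w) % (q^k − 1), (β·v − e₂·w) % (q − 1) ) is a bijection of V. -/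
/-- The map `Ψ(v, w) = ((α·v + Δ·w) % (q^k − 1), (β·v − e₂·w) % (q − 1))` is a bijection
of the set `V = {(v, w) : 0 ≤ v < q^k − 1, 0 ≤ w < q − 1}`. -/
theorem psi_bijective
    (q k : ℕ) (hq : 2 ≤ q) (hk : 1 ≤ k)
    (Δ e₂ α β : ℤ) (hΔ : Δ * ((q : ℤ) - 1) = (q : ℤ) ^ k - 1)
    (hα : 0 ≤ α ∧ α < (q : ℤ) ^ k - 1) (hβ : 0 ≤ β ∧ β < (q : ℤ) - 1)
    (hcong : e₂ * α + Δ * β ≡ 1 [ZMOD (q : ℤ) ^ k - 1]) :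
    Set.BijOn
      (fun vw : ℤ × ℤ =>
        ((α * vw.1 + Δ * vw.2) % ((q : ℤ) ^ k - 1), (β * vw.1 - e₂ * vw.2) % ((q : ℤ) - 1)))
      {vw : ℤ × ℤ | 0 ≤ vw.1 ∧ vw.1 < (q : ℤ) ^ k - 1 ∧ 0 ≤ vw.2 ∧ vw.2 < (q : ℤ) - 1}
      {vw : ℤ × ℤ | 0 ≤ vw.1 ∧ vw.1 < (q : ℤ) ^ k - 1 ∧ 0 ≤ vw.2 ∧ vw.2 < (q : ℤ) - 1} := by
  set M : ℤ := (q : ℤ) ^ k - 1 with hMdef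
  set N : ℤ := (q : ℤ) - 1 with hNdef
  have hq2 : (2 : ℤ) ≤ (q : ℤ) := by exact_mod_cast hq
  have hN : 0 < N := by omega
  have hM : 0 < M := by
    have : (2 : ℤ) ≤ (q : ℤ) ^ k := by
      calc (2 : ℤ) ≤ (q : ℤ) := hq2
      _ = (q : ℤ) ^ 1 := (pow_one _).symm
      _ ≤ (q : ℤ) ^ k := pow_le_pow_right₀ (by omega) hk
    omega
  have hΔpos : 0 < Δ := by
    rcases lt_trichotomy Δ 0 with h | h | h
    · nlinarith
    · simp [h] at hΔ; omega
    · exact h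
  have hfin : ({vw : ℤ × ℤ | 0 ≤ vw.1 ∧ vw.1 < M ∧ 0 ≤ vw.2 ∧ vw.2 < N}).Finite := by
    have : {vw : ℤ × ℤ | 0 ≤ vw.1 ∧ vw.1 < M ∧ 0 ≤ vw.2 ∧ vw.2 < N}
        = (Set.Ico (0 : ℤ) M) ×ˢ (Set.Ico (0 : ℤ) N) := by
      ext ⟨v, w⟩
      simp [Set.mem_Ico, and_assoc]
    rw [this]
    exact (Set.finite_Ico _ _).prod (Set.finite_Ico _ _)
  have hmaps : Set.MapsTo
      (fun vw : ℤ × ℤ => ((α * vw.1 + Δ * vw.2) % M, (β * vw.1 - e₂ * vw.2) % N))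
      {vw : ℤ × ℤ | 0 ≤ vw.1 ∧ vw.1 < M ∧ 0 ≤ vw.2 ∧ vw.2 < N}
      {vw : ℤ × ℤ | 0 ≤ vw.1 ∧ vw.1 < M ∧ 0 ≤ vw.2 ∧ vw.2 < N} := by
    intro ⟨v, w⟩ _
    exact ⟨Int.emod_nonneg _ hM.ne', Int.emod_lt_of_pos _ hM,
      Int.emod_nonneg _ hN.ne', Int.emod_lt_of_pos _ hN⟩
  have hinj : Set.InjOn
      (fun vw : ℤ × ℤ => ((α * vw.1 + Δ * vw.2) % M, (β * vw.1 - e₂ * vw.2) % N))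
      {vw : ℤ × ℤ | 0 ≤ vw.1 ∧ vw.1 < M ∧ 0 ≤ vw.2 ∧ vw.2 < N} := by
    rintro ⟨v, w⟩ ⟨hv0, hvM, hw0, hwN⟩ ⟨v', w'⟩ ⟨hv0', hvM', hw0', hwN'⟩ h
    simp only [Prod.mk.injEq] at h
    have h1 : M ∣ (α * v + Δ * w) - (α * v' + Δ * w') :=
      Int.ModEq.dvd (Int.ModEq.symm h.1)
    have h2 : N ∣ (β * v - e₂ * w) - (β * v' - e₂ * w') :=
      Int.ModEq.dvd (Int.ModEq.symm h.2)
    have h2' : M ∣ Δ * ((β * v - e₂ * w) - (β * v' - e₂ * w')) := by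
      rw [← hΔ]; exact mul_dvd_mul_left Δ h2
    have hc : M ∣ (e₂ * α + Δ * β) - 1 := Int.ModEq.dvd (Int.ModEq.symm hcong)
    have hvv : M ∣ (v - v') := by
      have key : M ∣ (e₂ * α + Δ * β) * (v - v') := by
        have : (e₂ * α + Δ * β) * (v - v')
            = e₂ * ((α * v + Δ * w) - (α * v' + Δ * w'))
              + Δ * ((β * v - e₂ * w) - (β * v' - e₂ * w')) := by ring
        rw [this]
        exact dvd_add (Dvd.dvd.mul_left h1 e₂) h2'
      have : (v - v') = (e₂ * α + Δ * β) * (v - v') - ((e₂ * α + Δ * β) - 1) * (v - v') := by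
        ring
      rw [this]
      exact dvd_sub key (Dvd.dvd.mul_right hc _)
    have hv : v = v' := by
      have := Int.eq_zero_of_abs_lt_dvd hvv (by rw [abs_lt]; omega)
      omega
    subst hv
    have hww : M ∣ Δ * (w - w') := by
      have : Δ * (w - w') = (α * v + Δ * w) - (α * v + Δ * w') := by ring
      rw [this]
      have := h.1
      exact Int.ModEq.dvd (Int.ModEq.symm h.1)
    have : N ∣ (w - w') := by
      rw [← hΔ, mul_dvd_mul_iff_left hΔpos.ne'] at hww
      exact hww
    have hw : w = w' := by
      have := Int.eq_zero_of_abs_lt_dvd this (by rw [abs_lt]; omega)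
      omega
    simp [hw]
  exact (Set.Finite.injOn_iff_bijOn_of_mapsTo hfin hmaps).mp hinj
end

section
/- Let q ≥ 2 and k ≥ 1 be integers, Δ = (q^k − 1)/(q − 1), and let e₁, e₂, α, β be integers with 0 ≤ α < q^k − 1, 0 ≤ β < q − 1 and e₂·α + Δ·β ≡ 1 (mod q^k − 1). Set d = gcd(q − 1, k·e₁ − e₂). If d > 1, then Δ·(e₁·α + β) ≡ 1 (mod d). -/
/-!
Modulo `q - 1` we have `q ≡ 1`, so `Δ = 1 + q + ⋯ + q^(k-1) ≡ k`. Reducing modulo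
`d = gcd(q - 1, k e₁ - e₂)`, which divides both `q - 1` and `q^k - 1`, gives
`Δ e₁ ≡ k e₁ ≡ e₂`, hence `Δ (e₁ α + β) ≡ e₂ α + Δ β ≡ 1`.
-/

theorem Int.geom_sum_modEq_sub_one (q : ℤ) (k : ℕ) :
    ∑ i ∈ Finset.range k, q ^ i ≡ k [ZMOD q - 1] :=
  (Int.ModEq.sum fun i _ => (Int.modEq_sub q 1).pow i).trans (by simp)

theorem Int.modEq_sub_one_of_mul_sub_one_eq {q Δ : ℤ} {k : ℕ} (hq : q ≠ 1)
    (hΔ : Δ * (q - 1) = q ^ k - 1) : Δ ≡ k [ZMOD q - 1] := by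
  have hΔsum : Δ = ∑ i ∈ Finset.range k, q ^ i :=
    mul_right_cancel₀ (sub_ne_zero.mpr hq) (by rw [hΔ, geom_sum_mul])
  exact hΔsum ▸ Int.geom_sum_modEq_sub_one q k

theorem delta_mul_congr_one_general
    (q k : ℕ) (hq : 2 ≤ q)
    (Δ e₁ e₂ α β : ℤ) (hΔ : Δ * ((q : ℤ) - 1) = (q : ℤ) ^ k - 1)
    (hcong : e₂ * α + Δ * β ≡ 1 [ZMOD (q : ℤ) ^ k - 1]) :
    Δ * (e₁ * α + β) ≡ 1 [ZMOD (Int.gcd ((q : ℤ) - 1) ((k : ℤ) * e₁ - e₂) : ℤ)] := by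
  set d : ℤ := (Int.gcd ((q : ℤ) - 1) ((k : ℤ) * e₁ - e₂) : ℤ)
  have hd_sub_one : d ∣ (q : ℤ) - 1 := Int.gcd_dvd_left _ _
  have hq_ne_one : (q : ℤ) ≠ 1 := by omega
  have hΔk : Δ ≡ k [ZMOD d] :=
    (Int.modEq_sub_one_of_mul_sub_one_eq hq_ne_one hΔ).of_dvd hd_sub_one
  have hke : (k : ℤ) * e₁ ≡ e₂ [ZMOD d] :=
    (Int.modEq_iff_dvd.mpr (Int.gcd_dvd_right _ _)).symm
  have hcong_d : e₂ * α + Δ * β ≡ 1 [ZMOD d] :=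
    hcong.of_dvd (hΔ ▸ hd_sub_one.mul_left Δ)
  calc Δ * (e₁ * α + β) = Δ * e₁ * α + Δ * β := by ring
    _ ≡ k * e₁ * α + Δ * β [ZMOD d] := ((hΔk.mul_right e₁).mul_right α).add_right _
    _ ≡ e₂ * α + Δ * β [ZMOD d] := (hke.mul_right α).add_right _
    _ ≡ 1 [ZMOD d] := hcong_d

/-- If `d = gcd(q − 1, k·e₁ − e₂) > 1`, then `Δ·(e₁·α + β) ≡ 1 (mod d)`. -/
theorem delta_mul_congr_one
    (q k : ℕ) (hq : 2 ≤ q) (hk : 1 ≤ k)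
    (Δ e₁ e₂ α β : ℤ) (hΔ : Δ * ((q : ℤ) - 1) = (q : ℤ) ^ k - 1)
    (hα : 0 ≤ α ∧ α < (q : ℤ) ^ k - 1) (hβ : 0 ≤ β ∧ β < (q : ℤ) - 1)
    (hcong : e₂ * α + Δ * β ≡ 1 [ZMOD (q : ℤ) ^ k - 1])
    (hd : 1 < Int.gcd ((q : ℤ) - 1) ((k : ℤ) * e₁ - e₂)) :
    Δ * (e₁ * α + β) ≡ 1 [ZMOD (Int.gcd ((q : ℤ) - 1) ((k : ℤ) * e₁ - e₂) : ℤ)] :=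
  delta_mul_congr_one_general q k hq Δ e₁ e₂ α β hΔ hcong
end

section
/- Let q be a prime power, k ≥ 1, Δ = (q^k − 1)/(q − 1), γ a primitive element of F_{q^k}, and let e₁, e₂, α, β be integers with 0 ≤ α < q^k − 1, 0 ≤ β < q − 1 and e₂·α + Δ·β ≡ 1 (mod q^k − 1). Set d = gcd(q − 1, k·e₁ − e₂) and let ρ be the integer with d·ρ = Δ·(e₁·α + β) − 1 (d divides Δ·(e₁·α + β) − 1). For a, b ∈ F_{q^k} define f(v, w) = a·γ^{Δ(e₁α+β)v + Δ·d·w} + b·γ^{v} for integers v, w (integer powers of the unit γ). Then for all integers v, w, r and for every t ∈ {0, 1, …, d − 1}: (1) γ^{rΔ}·f(v, w) = f((v + rΔ) % (q^k − 1), (w − rρ) % (q − 1)), and (2) f(v, w) = f(v, (w + ((q−1)/d)·t) % (q − 1)). -/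
/-!
Write `f v w = a γ^{c v + e w} + b γ^v` with `c = Δ(e₁α+β)` and `e = Δd`. Since `γ^{ΔQ} = 1`
for `Q = q - 1`, the value `f v w` only depends on `v` modulo `ΔQ` and on `w` modulo `Q`.
Multiplying by `γ^{rΔ}` shifts `(v, w)` by `(rΔ, -rρ)` because `c·rΔ - e·rρ = rΔ(c - dρ) = rΔ`,
and shifting `w` by `(Q/d)t` changes the first exponent by `ΔQt`, a multiple of the order of `γ`.
-/

theorem zpow_eq_zpow_of_modEq {G : Type*} [Group G] {x : G} {n m m' : ℤ} (hx : x ^ n = 1)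
    (h : m ≡ m' [ZMOD n]) : x ^ m = x ^ m' := by
  rw [zpow_eq_zpow_emod m hx, zpow_eq_zpow_emod m' hx, h.eq]

theorem Units.zpow_card_sub_one {E : Type*} [GroupWithZero E] [Fintype E] (x : Eˣ) :
    x ^ ((Fintype.card E : ℤ) - 1) = 1 := by
  classical
  have hcard : ((Fintype.card Eˣ : ℕ) : ℤ) = (Fintype.card E : ℤ) - 1 := by
    rw [Fintype.card_units, Nat.cast_sub Fintype.card_pos, Nat.cast_one]
  rw [← hcard, zpow_natCast, pow_card_eq_one]

section TwoTerm

variable {E : Type*} [CommSemiring E] (a b : E) (γ : Eˣ) (c e : ℤ)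

def twoTerm (v w : ℤ) : E :=
  a * ((γ ^ (c * v + e * w) : Eˣ) : E) + b * ((γ ^ v : Eˣ) : E)

theorem zpow_mul_twoTerm {s u : ℤ} (h : c * s + e * u = s) (v w : ℤ) :
    ((γ ^ s : Eˣ) : E) * twoTerm a b γ c e v w = twoTerm a b γ c e (v + s) (w + u) := by
  have hexp : c * (v + s) + e * (w + u) = s + (c * v + e * w) := by linear_combination h
  simp only [twoTerm, hexp, zpow_add, Units.val_mul]
  ring

variable {γ c e}

theorem twoTerm_congr {n : ℤ} (hγ : γ ^ n = 1) {v v' w w' : ℤ} (hv : v ≡ v' [ZMOD n])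
    (hvw : c * v + e * w ≡ c * v' + e * w' [ZMOD n]) :
    twoTerm a b γ c e v w = twoTerm a b γ c e v' w' := by
  rw [twoTerm, twoTerm, zpow_eq_zpow_of_modEq hγ hv, zpow_eq_zpow_of_modEq hγ hvw]

theorem twoTerm_congr_right {Δ Q : ℤ} (hγ : γ ^ (Δ * Q) = 1) (v : ℤ) {w w' : ℤ}
    (hw : w ≡ w' [ZMOD Q]) :
    twoTerm a b γ c (Δ * e) v w = twoTerm a b γ c (Δ * e) v w' := by
  refine twoTerm_congr a b hγ rfl (Int.ModEq.add_left _ ?_)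
  simpa only [mul_assoc] using (hw.mul_left e).mul_left' (c := Δ)

theorem twoTerm_emod {Δ Q : ℤ} (hγ : γ ^ (Δ * Q) = 1) (v w : ℤ) :
    twoTerm a b γ c (Δ * e) v w = twoTerm a b γ c (Δ * e) (v % (Δ * Q)) (w % Q) := by
  have hv : v ≡ v % (Δ * Q) [ZMOD Δ * Q] := (Int.mod_modEq v _).symm
  rw [twoTerm_congr_right a b hγ v (Int.mod_modEq w Q).symm]
  exact twoTerm_congr a b hγ hv (Int.ModEq.add_right _ (hv.mul_left c))

end TwoTerm

theorem f_invariance_general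
    (q k : ℕ)
    (E : Type*) [Field E] [Fintype E]
    (hE : Fintype.card E = q ^ k)
    (γ : Eˣ)
    (Δ e₁ e₂ α β : ℤ) (hΔ : Δ * ((q : ℤ) - 1) = (q : ℤ) ^ k - 1)
    (d : ℤ) (hd : d = (Int.gcd ((q : ℤ) - 1) ((k : ℤ) * e₁ - e₂) : ℤ))
    (ρ : ℤ) (hρ : d * ρ = Δ * (e₁ * α + β) - 1)
    (a b : E) (f : ℤ → ℤ → E)
    (hf : ∀ v w : ℤ,
      f v w = a * ((γ ^ (Δ * (e₁ * α + β) * v + Δ * d * w) : Eˣ) : E) + b * ((γ ^ v : Eˣ) : E)) :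
    ∀ v w r : ℤ, ∀ t : ℤ, 0 ≤ t → t < d →
      ((γ ^ (r * Δ) : Eˣ) : E) * f v w
          = f ((v + r * Δ) % ((q : ℤ) ^ k - 1)) ((w - r * ρ) % ((q : ℤ) - 1)) ∧
        f v w = f v ((w + (((q : ℤ) - 1) / d) * t) % ((q : ℤ) - 1)) := by
  intro v w r t _ _
  have hf : f = twoTerm a b γ (Δ * (e₁ * α + β)) (Δ * d) := funext₂ hf
  subst hf
  have hγ : γ ^ (Δ * ((q : ℤ) - 1)) = 1 := by
    rw [hΔ, ← Nat.cast_pow, ← hE]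
    exact γ.zpow_card_sub_one
  have hdQ : d * (((q : ℤ) - 1) / d) = (q : ℤ) - 1 :=
    Int.mul_ediv_cancel' (hd ▸ Int.gcd_dvd_left _ _)
  constructor
  · rw [← hΔ, ← twoTerm_emod a b hγ, sub_eq_add_neg]
    exact zpow_mul_twoTerm a b γ _ _ (by linear_combination (-(r * Δ)) * hρ) v w
  · rw [← twoTerm_congr_right a b hγ v (Int.mod_modEq _ _).symm]
    refine twoTerm_congr a b hγ rfl (Int.ModEq.add_left _ ?_)
    exact Int.modEq_iff_dvd.2 ⟨t, by linear_combination (Δ * t) * hdQ⟩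

/-- Invariance properties of the function
`f(v, w) = a·γ^{Δ(e₁α+β)v + Δ·d·w} + b·γ^{v}` (Lemma 6 of the paper). -/
theorem f_invariance
    (q k : ℕ) (hk : 1 ≤ k)
    (F E : Type*) [Field F] [Fintype F] [Field E] [Fintype E] [Algebra F E]
    (hq : 2 ≤ q) (hcard : Fintype.card F = q) (hE : Fintype.card E = q ^ k)
    (γ : Eˣ) (hγ : ∀ x : Eˣ, x ∈ Subgroup.zpowers γ)
    (Δ e₁ e₂ α β : ℤ) (hΔ : Δ * ((q : ℤ) - 1) = (q : ℤ) ^ k - 1)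
    (hα : 0 ≤ α ∧ α < (q : ℤ) ^ k - 1) (hβ : 0 ≤ β ∧ β < (q : ℤ) - 1)
    (hcong : e₂ * α + Δ * β ≡ 1 [ZMOD (q : ℤ) ^ k - 1])
    (d : ℤ) (hd : d = (Int.gcd ((q : ℤ) - 1) ((k : ℤ) * e₁ - e₂) : ℤ))
    (ρ : ℤ) (hρ : d * ρ = Δ * (e₁ * α + β) - 1)
    (a b : E) (f : ℤ → ℤ → E)
    (hf : ∀ v w : ℤ,
      f v w = a * ((γ ^ (Δ * (e₁ * α + β) * v + Δ * d * w) : Eˣ) : E) + b * ((γ ^ v : Eˣ) : E)) :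
    ∀ v w r : ℤ, ∀ t : ℤ, 0 ≤ t → t < d →
      ((γ ^ (r * Δ) : Eˣ) : E) * f v w
          = f ((v + r * Δ) % ((q : ℤ) ^ k - 1)) ((w - r * ρ) % ((q : ℤ) - 1)) ∧
        f v w = f v ((w + (((q : ℤ) - 1) / d) * t) % ((q : ℤ) - 1)) :=
  f_invariance_general q k E hE γ Δ e₁ e₂ α β hΔ d hd ρ hρ a b f hf
end

section
/- Let q be a prime power, k ≥ 1, Δ = (q^k − 1)/(q − 1), and let e₁, e₂ be integers with gcd(q − 1, k·e₁ − e₂) = 1 and gcd(Δ, e₂) = 1. For a, b ∈ F_{q^k} let T_{(e₁,e₂)}(a, b) = ∑_{x ∈ F_{q^k}^*} ∑_{y ∈ F_q^*} χ'(a·x^{Δe₁}·y + b·x^{e₂}·y). Then: T = (q − 1)(q^k − 1) if a = 0 and b = 0; T = −(q^k − 1) if Tr(a) ≠ 0 and b = 0; T = −(q − 1) if Tr(a) = 0 and b ≠ 0; and T = 1 if Tr(a) ≠ 0 and b ≠ 0. -/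
open Finset

private lemma aux_sq_dvd (d : ℤ) : ∀ n : ℕ, d ^ 2 ∣ (1 + d) ^ n - 1 - n * d
  | 0 => by simp
  | (n + 1) => by
    have ih := aux_sq_dvd d n
    have h2 : d ∣ (1 + d) ^ n - 1 := by
      simpa using sub_dvd_pow_sub_pow (1 + d) 1 n
    have h1 : d ^ 2 ∣ d * ((1 + d) ^ n - 1) := by
      rw [sq]; exact mul_dvd_mul_left d h2
    have key : (1 + d) ^ (n + 1) - 1 - ((n : ℤ) + 1) * d
        = ((1 + d) ^ n - 1 - n * d) + d * ((1 + d) ^ n - 1) := by ring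
    push_cast
    rw [key]
    exact dvd_add ih h1

private lemma sum_units_eq {K : Type*} [Field K] [Fintype K] [DecidableEq K] (f : K → ℂ) :
    ∑ x : Kˣ, f ↑x = (∑ z : K, f z) - f 0 := by
  have h1 : ∑ x : Kˣ, f ↑x = ∑ x : {a : K // a ≠ 0}, f ↑x := by
    rw [← Equiv.sum_comp unitsEquivNeZero (fun s : {a : K // a ≠ 0} => f ↑s)]
    simp [unitsEquivNeZero]
  have h2 : ∑ x : {a : K // a ≠ 0}, f ↑x = ∑ a ∈ univ.filter (· ≠ (0:K)), f a := by
    rw [Finset.sum_subtype (p := fun a : K => a ≠ 0) (univ.filter (· ≠ (0:K)))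
      (by intro x; simp) f]
  rw [h1, h2, Finset.filter_ne' univ 0, eq_sub_iff_add_eq,
    Finset.sum_erase_add _ _ (mem_univ 0)]

private lemma frob_fixed {F E : Type*} [Field F] [Fintype F] [Field E] [Fintype E]
    [DecidableEq E] [Algebra F E] {q : ℕ} (hcard : Fintype.card F = q)
    {z : E} (hz : z ^ q = z) : ∃ y : F, algebraMap F E y = z := by
  have hq2 : 2 ≤ q := hcard ▸ Fintype.one_lt_card
  by_contra hcon
  push_neg at hcon
  set P : Polynomial E := Polynomial.X ^ q - Polynomial.X with hP
  have hdeg : P.natDegree = q := by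
    rw [hP]
    rw [Polynomial.natDegree_sub_eq_left_of_natDegree_lt] <;>
      simp [Polynomial.natDegree_X_pow, Polynomial.natDegree_X]
    omega
  have hP0 : P ≠ 0 := fun h => by simp [h] at hdeg; omega
  set s : Finset E := univ.image (algebraMap F E) with hs
  have hscard : s.card = q := by
    rw [hs, Finset.card_image_of_injective _ (algebraMap F E).injective, card_univ, hcard]
  have hzs : z ∉ s := by
    simp only [hs, mem_image, mem_univ, true_and]
    rintro ⟨y, hy⟩; exact hcon y hy
  have hroot : ∀ w ∈ insert z s, w ∈ P.roots.toFinset := by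
    intro w hw
    rw [Multiset.mem_toFinset, Polynomial.mem_roots hP0]
    have hwq : w ^ q = w := by
      rcases Finset.mem_insert.mp hw with h | h
      · rw [h]; exact hz
      · simp only [hs, mem_image, mem_univ, true_and] at h
        obtain ⟨y, rfl⟩ := h
        rw [← map_pow]
        congr 1
        rw [← hcard]
        exact FiniteField.pow_card y
    simp [hP, Polynomial.IsRoot, sub_eq_zero, hwq]
  have hle : (insert z s).card ≤ P.roots.toFinset.card :=
    Finset.card_le_card (fun w hw => hroot w hw)
  have : P.roots.toFinset.card ≤ q := by
    calc P.roots.toFinset.card ≤ Multiset.card P.roots := P.roots.toFinset_card_le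
    _ ≤ P.natDegree := P.card_roots'
    _ = q := hdeg
  rw [Finset.card_insert_of_notMem hzs, hscard] at hle
  omega

/-- Evaluation of the exponential sum
`T_{(e₁,e₂)}(a, b) = ∑_{x ∈ F_{q^k}^*} ∑_{y ∈ F_q^*} χ'(a·x^{Δe₁}·y + b·x^{e₂}·y)`
in the four cases of Corollary 1 of the paper. -/
theorem exponential_sum_values
    (q k : ℕ) (hk : 1 ≤ k)
    (F E : Type*) [Field F] [Fintype F] [DecidableEq F] [Field E] [Fintype E]
    [DecidableEq E] [Algebra F E]
    (hcard : Fintype.card F = q) (hE : Fintype.card E = q ^ k)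
    (p : ℕ) [Fact p.Prime] [CharP E p] [Algebra (ZMod p) E]
    (χ' : E → ℂ)
    (hχ : ∀ x : E, χ' x =
      Complex.exp (2 * Real.pi * Complex.I * ((Algebra.trace (ZMod p) E x).val : ℂ) / p))
    (Δ e₁ e₂ : ℤ) (hΔ : Δ * ((q : ℤ) - 1) = (q : ℤ) ^ k - 1)
    (hgcd : Int.gcd ((q : ℤ) - 1) ((k : ℤ) * e₁ - e₂) = 1)
    (he₂ : Int.gcd Δ e₂ = 1)
    (a b : E)
    (T : ℂ)
    (hT : T = ∑ x : Eˣ, ∑ y : Fˣ,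
      χ' (a * ((x ^ (Δ * e₁) : Eˣ) : E) * algebraMap F E (y : F)
        + b * ((x ^ e₂ : Eˣ) : E) * algebraMap F E (y : F))) :
    (a = 0 ∧ b = 0 → T = ((q : ℂ) - 1) * ((q : ℂ) ^ k - 1)) ∧
    (Algebra.trace F E a ≠ 0 ∧ b = 0 → T = -((q : ℂ) ^ k - 1)) ∧
    (Algebra.trace F E a = 0 ∧ b ≠ 0 → T = -((q : ℂ) - 1)) ∧
    (Algebra.trace F E a ≠ 0 ∧ b ≠ 0 → T = 1) := by
  classical
  have hq2 : 2 ≤ q := hcard ▸ Fintype.one_lt_card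
  have hqk1 : 1 ≤ q ^ k := Nat.one_le_pow _ _ (by omega)
  have hqk2 : 2 ≤ q ^ k := by
    calc 2 ≤ q := hq2
    _ = q ^ 1 := (pow_one q).symm
    _ ≤ q ^ k := Nat.pow_le_pow_right (by omega) hk
  haveI hFp : CharP F p := by
    have hpp : p.Prime := Fact.out
    have h0 : ((p : ℕ) : F) = 0 := by
      apply (algebraMap F E).injective
      rw [map_natCast, map_zero]
      exact CharP.cast_eq_zero E p
    exact (CharP.charP_iff_prime_eq_zero hpp).mpr h0
  letI : Algebra (ZMod p) F := ZMod.algebra F p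
  haveI : IsScalarTower (ZMod p) F E := IsScalarTower.of_algebraMap_eq' (RingHom.ext_zmod _ _)
  haveI : NeZero p := ⟨(Fact.out : p.Prime).ne_zero⟩
  have hp0 : (p : ℕ) ≠ 0 := (Fact.out : p.Prime).ne_zero
  -- the canonical character of `ZMod p`
  have hprim : IsPrimitiveRoot (Complex.exp (2 * Real.pi * Complex.I / p)) p :=
    Complex.isPrimitiveRoot_exp p hp0
  have hζp : Complex.exp (2 * Real.pi * Complex.I / p) ^ p = 1 := hprim.pow_eq_one
  set ψp : AddChar (ZMod p) ℂ := AddChar.zmodChar p hζp with hψpdef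
  have hψp_prim : ψp.IsPrimitive := AddChar.zmodChar_primitive_of_primitive_root p hprim
  have hψp_one : ∀ m : ZMod p, ψp m = 1 ↔ m = 0 := fun m =>
    AddChar.IsPrimitive.zmod_char_eq_one_iff p hψp_prim m
  have hχ2 : ∀ x : E, χ' x = ψp (Algebra.trace (ZMod p) E x) := by
    intro x
    rw [hχ x, hψpdef, AddChar.zmodChar_apply, ← Complex.exp_nat_mul]
    congr 1
    ring
  set χE : AddChar E ℂ := ψp.compAddMonoidHom (Algebra.trace (ZMod p) E).toAddMonoidHom
    with hχEdef
  set ψF : AddChar F ℂ := ψp.compAddMonoidHom (Algebra.trace (ZMod p) F).toAddMonoidHom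
    with hψFdef
  have hχEval : ∀ x : E, χE x = ψp (Algebra.trace (ZMod p) E x) := fun x => rfl
  have hψFval : ∀ x : F, ψF x = ψp (Algebra.trace (ZMod p) F x) := fun x => rfl
  have hsurjE : Function.Surjective (Algebra.trace (ZMod p) E) := Algebra.trace_surjective _ _
  have hsurjF : Function.Surjective (Algebra.trace (ZMod p) F) := Algebra.trace_surjective _ _
  have hχE_ne : χE ≠ 1 := by
    obtain ⟨x, hx⟩ := hsurjE 1
    rw [AddChar.ne_one_iff]
    refine ⟨x, ?_⟩
    rw [hχEval, hx]
    exact fun h => one_ne_zero ((hψp_one 1).mp h)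
  have hψF_ne : ψF ≠ 1 := by
    obtain ⟨x, hx⟩ := hsurjF 1
    rw [AddChar.ne_one_iff]
    refine ⟨x, ?_⟩
    rw [hψFval, hx]
    exact fun h => one_ne_zero ((hψp_one 1).mp h)
  -- the key relation between `χ'` and `ψF`
  have hkey : ∀ (z : E) (y : F), χ' (z * algebraMap F E y) = ψF (Algebra.trace F E z * y) := by
    intro z y
    rw [hχ2]
    have h1 : z * algebraMap F E y = y • z := by rw [Algebra.smul_def]; ring
    rw [h1]
    have h2 : Algebra.trace (ZMod p) E (y • z)
        = Algebra.trace (ZMod p) F (y * Algebra.trace F E z) := by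
      rw [← Algebra.trace_trace (S := F), map_smul, smul_eq_mul]
    rw [h2, hψFval, mul_comm]
  -- sum of `ψF (c * y)` over units
  have hFsum : ∀ c : F, (∑ y : Fˣ, ψF (c * ↑y)) = if c = 0 then ((q:ℂ) - 1) else -1 := by
    intro c
    by_cases hc : c = 0
    · simp only [hc, zero_mul, if_true, AddChar.map_zero_eq_one]
      rw [Finset.sum_const, card_univ, Fintype.card_units, hcard, nsmul_eq_mul, mul_one,
        Nat.cast_sub (by omega), Nat.cast_one]
    · have h0 : (∑ t : F, ψF (c * t)) = 0 := by
        have hne : ψF.mulShift c ≠ 1 := (AddChar.IsPrimitive.of_ne_one hψF_ne) hc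
        have hs := AddChar.sum_eq_zero_of_ne_one hne
        simpa using hs
      rw [if_neg hc, sum_units_eq (fun t => ψF (c * t)), h0]
      simp
  set Sv : E → ℂ := fun z => ∑ y : Fˣ, χ' (z * algebraMap F E ↑y) with hSvdef
  have hSval : ∀ z : E, Sv z = if Algebra.trace F E z = 0 then ((q:ℂ) - 1) else -1 := by
    intro z
    calc Sv z = ∑ y : Fˣ, ψF (Algebra.trace F E z * ↑y) :=
          Finset.sum_congr rfl fun y _ => hkey z ↑y
    _ = _ := hFsum _
  have hSumE : (∑ z : E, Sv z) = 0 := by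
    rw [hSvdef]
    rw [Finset.sum_comm]
    apply Finset.sum_eq_zero
    intro y _
    have hy0 : algebraMap F E (y : F) ≠ 0 := by
      simp only [ne_eq, map_eq_zero]
      exact y.ne_zero
    have hne : χE.mulShift (algebraMap F E ↑y) ≠ 1 :=
      (AddChar.IsPrimitive.of_ne_one hχE_ne) hy0
    have hs := AddChar.sum_eq_zero_of_ne_one hne
    calc ∑ z : E, χ' (z * algebraMap F E ↑y)
        = ∑ z : E, χE.mulShift (algebraMap F E ↑y) z := by
          refine Finset.sum_congr rfl fun z _ => ?_
          rw [AddChar.mulShift_apply, mul_comm, hχEval, hχ2]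
    _ = 0 := hs
  -- arithmetic of exponents
  have hd0 : ((q:ℤ) - 1) ≠ 0 := by
    have : (2:ℤ) ≤ q := by exact_mod_cast hq2
    omega
  have hΔk : ((q:ℤ) - 1) ∣ (Δ - k) := by
    have haux := aux_sq_dvd ((q:ℤ) - 1) k
    have h1 : (1 + ((q:ℤ) - 1)) = q := by ring
    rw [h1] at haux
    have h2 : (q:ℤ)^k - 1 - k*((q:ℤ)-1) = (Δ - k) * ((q:ℤ)-1) := by
      rw [← hΔ]; ring
    rw [h2, sq] at haux
    obtain ⟨t, ht⟩ := haux
    refine ⟨t, ?_⟩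
    apply mul_right_cancel₀ hd0
    rw [ht]; ring
  have hcop1 : IsCoprime (e₂ - Δ * e₁) ((q:ℤ) - 1) := by
    obtain ⟨t, ht⟩ := hΔk
    have h1 : IsCoprime ((q:ℤ) - 1) ((k:ℤ) * e₁ - e₂) := Int.isCoprime_iff_gcd_eq_one.mpr hgcd
    have h3 : IsCoprime (-((k:ℤ)*e₁ - e₂)) ((q:ℤ) - 1) := h1.symm.neg_left
    have h4 := h3.add_mul_left_left (-(t * e₁))
    have heq : -((k:ℤ)*e₁ - e₂) + ((q:ℤ)-1) * (-(t * e₁)) = e₂ - Δ * e₁ := by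
      have hΔeq : Δ = (k:ℤ) + ((q:ℤ)-1)*t := by linarith [ht]
      rw [hΔeq]; ring
    rwa [heq] at h4
  have hcop2 : IsCoprime (e₂ - Δ * e₁) Δ := by
    have h1 : IsCoprime e₂ Δ := (Int.isCoprime_iff_gcd_eq_one.mpr he₂).symm
    have h4 := h1.add_mul_left_left (-e₁)
    have heq : e₂ + Δ * (-e₁) = e₂ - Δ * e₁ := by ring
    rwa [heq] at h4
  have hcopN : IsCoprime (e₂ - Δ * e₁) ((q:ℤ)^k - 1) := by
    rw [← hΔ]
    exact hcop2.mul_right hcop1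
  -- cardinalities
  have hcardEu : Fintype.card Eˣ = q ^ k - 1 := by rw [Fintype.card_units, hE]
  have hNcard : Nat.card Eˣ = q ^ k - 1 := by rw [Nat.card_eq_fintype_card, hcardEu]
  have hNpos : 0 < q ^ k - 1 := by omega
  have hcastZ : ((q ^ k - 1 : ℕ) : ℤ) = (q:ℤ)^k - 1 := by
    rw [Nat.cast_sub hqk1]
    push_cast
    ring
  have hupow : ∀ u : Eˣ, u ^ ((q:ℤ)^k - 1) = 1 := by
    intro u
    rw [← hcastZ, zpow_natCast, ← hcardEu, pow_card_eq_one]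
  -- each `x ^ (Δ * e₁)` comes from `Fˣ`
  have hcex : ∀ u : Eˣ, ∃ c : Fˣ, algebraMap F E ↑c = ((u ^ (Δ * e₁) : Eˣ) : E) := by
    intro u
    have h1 : (u ^ (Δ * e₁)) ^ ((q:ℤ) - 1) = 1 := by
      rw [← zpow_mul]
      have h : Δ * e₁ * ((q:ℤ) - 1) = ((q:ℤ)^k - 1) * e₁ := by rw [← hΔ]; ring
      rw [h, zpow_mul, hupow u, one_zpow]
    set v : Eˣ := u ^ (Δ * e₁) with hv
    have h3 : v ^ (q - 1 : ℕ) = 1 := by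
      have hcq : ((q - 1 : ℕ) : ℤ) = (q:ℤ) - 1 := by
        rw [Nat.cast_sub (by omega)]; ring
      rw [← zpow_natCast, hcq, h1]
    have h2 : ((v:E)) ^ (q - 1) = 1 := by
      have := congrArg (Units.val) h3
      rwa [Units.val_pow_eq_pow_val, Units.val_one] at this
    have h4 : (v:E) ^ q = (v:E) := by
      have hq : q = (q - 1) + 1 := by omega
      rw [hq, pow_succ, h2, one_mul]
    obtain ⟨y, hy⟩ := frob_fixed hcard h4
    have hy0 : y ≠ 0 := by
      intro h
      rw [h, map_zero] at hy
      exact (Units.ne_zero v) hy.symm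
    exact ⟨Units.mk0 y hy0, hy⟩
  -- Step A : collapse the inner sum
  have hstepA : ∀ x : Eˣ,
      (∑ y : Fˣ, χ' (a * ((x ^ (Δ * e₁) : Eˣ) : E) * algebraMap F E (y : F)
        + b * ((x ^ e₂ : Eˣ) : E) * algebraMap F E (y : F)))
      = Sv (a + b * ((x ^ (e₂ - Δ * e₁) : Eˣ) : E)) := by
    intro x
    obtain ⟨c, hc⟩ := hcex x
    rw [hSvdef]
    simp only
    rw [← Equiv.sum_comp (Equiv.mulLeft c)
      (fun y : Fˣ => χ' ((a + b * ((x ^ (e₂ - Δ * e₁) : Eˣ) : E)) * algebraMap F E (y : F)))]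
    refine Finset.sum_congr rfl fun y _ => ?_
    simp only [Equiv.coe_mulLeft]
    congr 1
    have hval : algebraMap F E ((c * y : Fˣ) : F)
        = ((x ^ (Δ * e₁) : Eˣ) : E) * algebraMap F E (y : F) := by
      rw [Units.val_mul, map_mul, hc]
    have hexp : e₂ - Δ * e₁ + Δ * e₁ = e₂ := by ring
    have hmul : ((x ^ (e₂ - Δ * e₁) : Eˣ) : E) * ((x ^ (Δ * e₁) : Eˣ) : E)
        = ((x ^ e₂ : Eˣ) : E) := by
      rw [← Units.val_mul, ← zpow_add, hexp]
    rw [hval]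
    linear_combination (-(b * algebraMap F E (y : F))) * hmul
  have hT2 : T = ∑ x : Eˣ, Sv (a + b * ((x ^ (e₂ - Δ * e₁) : Eˣ) : E)) := by
    rw [hT]
    exact Finset.sum_congr rfl fun x _ => hstepA x
  -- Step B : the power map is a bijection on `Eˣ`
  set n : ℕ := ((e₂ - Δ * e₁) % ((q ^ k - 1 : ℕ) : ℤ)).toNat with hn
  have hNne : ((q ^ k - 1 : ℕ) : ℤ) ≠ 0 := by
    rw [hcastZ]
    have : (2:ℤ) ≤ (q:ℤ)^k := by exact_mod_cast hqk2
    omega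
  have hnval : ((n:ℤ)) = (e₂ - Δ * e₁) % ((q ^ k - 1 : ℕ) : ℤ) := by
    rw [hn, Int.toNat_of_nonneg (Int.emod_nonneg _ hNne)]
  have hmodeq : ∀ u : Eˣ, u ^ (e₂ - Δ * e₁) = u ^ n := by
    intro u
    rw [← zpow_natCast u n, hnval, ← hNcard]
    exact (zpow_mod_natCard u _).symm
  have hncop : (Nat.card Eˣ).Coprime n := by
    have h1 : IsCoprime ((n:ℤ)) ((q:ℤ)^k - 1) := by
      have h3 : (n:ℤ) = (e₂ - Δ*e₁) + ((q:ℤ)^k - 1)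
          * (-((e₂ - Δ*e₁) / ((q ^ k - 1 : ℕ) : ℤ))) := by
        rw [hnval, Int.emod_def, hcastZ]
        ring
      rw [h3]
      exact hcopN.add_mul_left_left _
    have h4 : Int.gcd (n:ℤ) ((q:ℤ)^k - 1) = 1 := Int.isCoprime_iff_gcd_eq_one.mp h1
    rw [← hcastZ, Int.gcd_natCast_natCast] at h4
    rw [hNcard]
    exact (Nat.coprime_comm.mp h4)
  have hT3 : T = ∑ x : Eˣ, Sv (a + b * (x : E)) := by
    rw [hT2]
    calc ∑ x : Eˣ, Sv (a + b * ((x ^ (e₂ - Δ * e₁) : Eˣ) : E))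
        = ∑ x : Eˣ, Sv (a + b * ((x ^ n : Eˣ) : E)) :=
          Finset.sum_congr rfl fun x _ => by rw [hmodeq x]
    _ = ∑ x : Eˣ, Sv (a + b * (x : E)) := by
          rw [← Equiv.sum_comp (powCoprime hncop) (fun u : Eˣ => Sv (a + b * (u : E)))]
          rfl
  -- final case analysis
  have hcastqk : ((q ^ k - 1 : ℕ) : ℂ) = (q:ℂ)^k - 1 := by
    rw [Nat.cast_sub hqk1]
    push_cast
    ring
  have hbne : b ≠ 0 → T = -(Sv a) := by
    intro hb
    rw [hT3]
    have he : (∑ z : E, Sv (a + b * z)) = ∑ z : E, Sv z :=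
      Fintype.sum_equiv ((Equiv.mulLeft₀ b hb).trans (Equiv.addLeft a)) _ _
        (fun z => by simp)
    calc ∑ x : Eˣ, Sv (a + b * (x:E))
        = (∑ z : E, Sv (a + b * z)) - Sv (a + b * 0) := sum_units_eq fun z => Sv (a + b * z)
    _ = -(Sv a) := by rw [he, hSumE, mul_zero, add_zero]; ring
  refine ⟨?_, ?_, ?_, ?_⟩
  · rintro ⟨rfl, rfl⟩
    rw [hT3]
    have hz : ∀ x : Eˣ, Sv ((0:E) + 0 * (x:E)) = (q:ℂ) - 1 := by
      intro x
      rw [show (0:E) + 0 * (x:E) = 0 by ring, hSval]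
      simp
    rw [Finset.sum_congr rfl fun x _ => hz x, Finset.sum_const, card_univ, hcardEu,
      nsmul_eq_mul, hcastqk]
    ring
  · rintro ⟨ha, rfl⟩
    rw [hT3]
    have hz : ∀ x : Eˣ, Sv (a + 0 * (x:E)) = -1 := by
      intro x
      rw [show a + 0 * (x:E) = a by ring, hSval, if_neg ha]
    rw [Finset.sum_congr rfl fun x _ => hz x, Finset.sum_const, card_univ, hcardEu,
      nsmul_eq_mul, hcastqk]
    ring
  · rintro ⟨ha, hb⟩
    rw [hbne hb, hSval, if_pos ha]
  · rintro ⟨ha, hb⟩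
    rw [hbne hb, hSval, if_neg ha]
    norm_num
end

section
/- Let q be a prime power, k ≥ 1, Δ = (q^k − 1)/(q − 1), and let e₂ ≥ 1 be an integer with gcd(Δ, e₂) = 1. Then for every b ∈ F_{q^k} with b ≠ 0, the number of elements x ∈ F_{q^k} with Tr(b·x^{e₂}) = 0 equals q^{k−1}. -/
/-!
The set `K = {z | Tr(b z) = 0}` is an `F`-hyperplane of `E`, so `#K = q^(k-1)`, and `K \ {0}` is a
union of cosets of `F^×` in `E^×`. The quotient `E^× / F^×` has order `Δ`, coprime to `e₂`, so the
`e₂`-th power map is a bijection on it; hence `x ↦ x^e₂` pulls `K \ {0}` back to a subset of `E^×`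
of the same size. Adding `x = 0` gives `q^(k-1)`.
-/

theorem Subgroup.card_preimage_pow_of_coprime_index {G : Type*} [Group G] (H : Subgroup G)
    [H.Normal] {e : ℕ} (he : H.index.Coprime e) {S : Set G} (hS : ∀ s ∈ S, ∀ h ∈ H, s * h ∈ S) :
    Nat.card ((· ^ e) ⁻¹' S : Set G) = Nat.card S := by
  -- both sides are preimages under `π` of sets matched by the bijection `powCoprime he`
  set π : G → G ⧸ H := QuotientGroup.mk
  have hsat : ∀ g, g ∈ S ↔ π g ∈ π '' S := by
    refine fun g ↦ ⟨Set.mem_image_of_mem π, ?_⟩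
    rintro ⟨s, hs, hsg⟩
    simpa using hS s hs _ (QuotientGroup.eq.mp hsg)
  have hpow : (· ^ e) ⁻¹' S = π ⁻¹' ((· ^ e) ⁻¹' (π '' S)) := by
    ext g
    simp only [Set.mem_preimage, hsat (g ^ e), π, QuotientGroup.mk_pow]
  have hS' : S = π ⁻¹' (π '' S) := Set.ext hsat
  rw [hpow, QuotientGroup.card_preimage_mk, hS', QuotientGroup.card_preimage_mk, ← hS']
  congr 1
  exact Nat.card_preimage_of_injective (powCoprime he).injective
    fun y _ ↦ (powCoprime he).surjective y

theorem Nat.card_units_mem_add_one {G₀ : Type*} [GroupWithZero G₀] [Finite G₀] {s : Set G₀}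
    (h0 : (0 : G₀) ∈ s) : Nat.card {u : G₀ˣ | (u : G₀) ∈ s} + 1 = Nat.card s := by
  have himage : Units.val '' {u : G₀ˣ | (u : G₀) ∈ s} = s \ {0} := by
    ext x
    constructor
    · rintro ⟨u, hu, rfl⟩
      exact ⟨hu, u.ne_zero⟩
    · rintro ⟨hx, hx0⟩
      exact ⟨Units.mk0 x hx0, hx, rfl⟩
  rw [← Nat.card_image_of_injective Units.val_injective, himage, Nat.card_coe_set_eq,
    Nat.card_coe_set_eq, Set.ncard_sdiff_singleton_add_one h0]

theorem LinearMap.card_ker_mul_card_of_surjective {R V W : Type*} [Ring R] [AddCommGroup V]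
    [AddCommGroup W] [Module R V] [Module R W] (f : V →ₗ[R] W) (hf : Function.Surjective f) :
    Nat.card (LinearMap.ker f) * Nat.card W = Nat.card V := by
  have := f.toAddMonoidHom.ker.card_mul_index
  rwa [AddSubgroup.index_ker, AddMonoidHom.range_eq_top.mpr hf, AddSubgroup.card_top] at this

theorem index_range_unitsMap_algebraMap_mul (F E : Type*) [Field F] [Field E] [Algebra F E]
    [Finite E] :
    (Units.map (algebraMap F E : F →* E)).range.index * (Nat.card F - 1) = Nat.card E - 1 := by
  have hinj : Function.Injective (Units.map (algebraMap F E : F →* E)) :=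
    fun u v h ↦ Units.ext ((algebraMap F E).injective (Units.ext_iff.mp h))
  rw [← Nat.card_units, ← Nat.card_units, Nat.card_congr (MonoidHom.ofInjective hinj).toEquiv,
    mul_comm, Subgroup.card_mul_index]

theorem card_trace_mul_eq_zero_mul_card (F : Type*) {E : Type*} [Field F] [Finite F] [Field E]
    [Finite E] [Algebra F E] {b : E} (hb : b ≠ 0) :
    Nat.card {z : E | Algebra.trace F E (b * z) = 0} * Nat.card F = Nat.card E := by
  have : FiniteDimensional F E := Module.Finite.of_finite
  have hsurj : Function.Surjective (Algebra.traceForm F E b) := by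
    intro c
    obtain ⟨w, hw⟩ := Algebra.trace_surjective F E c
    exact ⟨b⁻¹ * w, by rw [Algebra.traceForm_apply, mul_inv_cancel_left₀ hb, hw]⟩
  rw [← LinearMap.card_ker_mul_card_of_surjective _ hsurj]
  rfl

theorem trace_mul_mul_algebraMap {F E : Type*} [CommRing F] [CommRing E] [Algebra F E]
    (b z : E) (c : F) :
    Algebra.trace F E (b * (z * algebraMap F E c)) = c * Algebra.trace F E (b * z) := by
  rw [← smul_eq_mul c, ← map_smul, Algebra.smul_def]
  congr 1
  ring

theorem card_trace_eq_zero_general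
    (q k : ℕ)
    (F E : Type*) [Field F] [Fintype F] [Field E] [Fintype E] [Algebra F E]
    (hcard : Fintype.card F = q) (hE : Fintype.card E = q ^ k)
    (Δ : ℕ) (hΔ : Δ * (q - 1) = q ^ k - 1)
    (e₂ : ℕ) (he₂pos : 1 ≤ e₂) (he₂ : Nat.gcd Δ e₂ = 1)
    (b : E) (hb : b ≠ 0) :
    Nat.card {x : E // Algebra.trace F E (b * x ^ e₂) = 0} = q ^ (k - 1) := by
  rw [← Nat.card_eq_fintype_card] at hcard hE
  have hq : 1 < q := hcard ▸ Finite.one_lt_card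
  have hk : k ≠ 0 := by
    rintro rfl
    exact (Finite.one_lt_card (α := E)).ne' (by rw [hE, pow_zero])
  set H := (Units.map (algebraMap F E : F →* E)).range
  have hindex : H.index = Δ := by
    have := index_range_unitsMap_algebraMap_mul F E
    rw [hcard, hE, ← hΔ] at this
    exact Nat.eq_of_mul_eq_mul_right (by omega) this
  set K : Set E := {z | Algebra.trace F E (b * z) = 0}
  have hK : Nat.card K = q ^ (k - 1) := by
    have := card_trace_mul_eq_zero_mul_card F hb
    rw [hcard, hE, ← Nat.succ_pred hk, pow_succ] at this
    exact Nat.eq_of_mul_eq_mul_right (by omega) this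
  set S : Set Eˣ := {u | (u : E) ∈ K}
  have hS : ∀ s ∈ S, ∀ h ∈ H, s * h ∈ S := by
    rintro s (hs : Algebra.trace F E (b * s) = 0) - ⟨c, rfl⟩
    change Algebra.trace F E (b * (s * algebraMap F E c)) = 0
    rw [trace_mul_mul_algebraMap, hs, mul_zero]
  set A : Set E := {x | Algebra.trace F E (b * x ^ e₂) = 0}
  have hAS : {u : Eˣ | (u : E) ∈ A} = (· ^ e₂) ⁻¹' S := by
    ext u
    simp [A, S, K]
  calc Nat.card A
      = Nat.card {u : Eˣ | (u : E) ∈ A} + 1 :=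
        (Nat.card_units_mem_add_one (by simp [A, zero_pow (by omega : e₂ ≠ 0)])).symm
    _ = Nat.card S + 1 := by rw [hAS, H.card_preimage_pow_of_coprime_index (hindex ▸ he₂) hS]
    _ = q ^ (k - 1) := by rw [Nat.card_units_mem_add_one (by simp [K]), hK]

/-- If `gcd(Δ, e₂) = 1` and `b ≠ 0`, then the number of `x ∈ F_{q^k}` with
`Tr(b·x^{e₂}) = 0` equals `q^{k−1}`. -/
theorem card_trace_eq_zero
    (q k : ℕ) (hk : 1 ≤ k)
    (F E : Type*) [Field F] [Fintype F] [Field E] [Fintype E] [Algebra F E]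
    (hcard : Fintype.card F = q) (hE : Fintype.card E = q ^ k)
    (Δ : ℕ) (hΔ : Δ * (q - 1) = q ^ k - 1)
    (e₂ : ℕ) (he₂pos : 1 ≤ e₂) (he₂ : Nat.gcd Δ e₂ = 1)
    (b : E) (hb : b ≠ 0) :
    Nat.card {x : E // Algebra.trace F E (b * x ^ e₂) = 0} = q ^ (k - 1) :=
  card_trace_eq_zero_general q k F E hcard hE Δ hΔ e₂ he₂pos he₂ b hb
end

section
/- Let q be a prime power, k > 1, Δ = (q^k − 1)/(q − 1), γ a primitive element of F_{q^k}, and let e₁, e₂ be integers with gcd(q − 1, k·e₁ − e₂) = 1 and gcd(Δ, e₂) = 1. Let C = { c(a, b) : a, b ∈ F_{q^k} } ⊆ (Fin (q^k − 1) → F_q), where c(a, b)_i = Tr(a·γ^{Δe₁·i} + b·γ^{e₂·i}). For j ≥ 1 let B_j be the number of vectors v ∈ (Fin (q^k − 1) → F_q) of Hamming weight j satisfying ∑_i v_i·c_i = 0 for every c ∈ C (i.e. the number of weight-j words in the dual code of C). Then B_1 = 0, B_2 = 0, and B_3 = (q^k − 3)(q^k − 1)(q − 2)(q − 1)/6. 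-/
/-!
Trace duality turns orthogonality to the code into the two equations `∑ vᵢ γ^(Δe₁ i) = 0` and
`∑ vᵢ γ^(e₂ i) = 0`. Since `γ^Δ` is the norm of `γ`, the first equation has the coefficients
`sᵢ = N(γ)^(e₁ i)` in `F`, and the second one reads `∑ sᵢ vᵢ dⁱ = 0` with `d = γ^(e₂ - Δe₁)`, which
generates `Eˣ` by the two gcd conditions. Rescaling `vᵢ` by `sᵢ` and indexing by `x = dⁱ` identifies
the dual code, weight by weight, with the kernel of `w ↦ (∑ w x, ∑ w x • x)` on `Eˣ → F`.
No kernel vector has weight one or two, and a kernel vector of weight three with `a = w x`,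
`b = w y` has support `{x, y, (a x + b y) / (a + b)}`. Hence ordered pairs of distinct support
points of weight-three kernel vectors correspond to the data `(a, b, x, y)` with `a, b, a + b ≠ 0`,
`x ≠ y` and `a x + b y ≠ 0`, of which there are `(q - 1)(q - 2) · n(n - 2)` for `n = q^k - 1`.
-/

open Finset

section Counting

variable {α β : Type*} [Fintype α] [Fintype β]

theorem card_filter_ne_and_ne [DecidableEq α] {x y : α} (hxy : x ≠ y) :
    #{z | z ≠ x ∧ z ≠ y} = Fintype.card α - 2 := by
  rw [show ({z | z ≠ x ∧ z ≠ y} : Finset α) = (univ.erase x).erase y by ext; simp [and_comm],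
    card_erase_of_mem (by simp [hxy.symm]), card_erase_of_mem (mem_univ _), card_univ]
  omega

theorem card_filter_prod (Q : α → β → Prop) [∀ a, DecidablePred (Q a)] :
    #{p : α × β | Q p.1 p.2} = ∑ a, #{b | Q a b} := by
  simp only [card_filter, Fintype.sum_prod_type]

theorem card_filter_prod_of_card_fiber {P : α → Prop} {Q : α → β → Prop} [DecidablePred P]
    [∀ a, DecidablePred (Q a)] {m : ℕ} (h : ∀ a, P a → #{b | Q a b} = m) :
    #{p : α × β | P p.1 ∧ Q p.1 p.2} = #{a | P a} * m := by
  rw [card_filter_prod (fun a b => P a ∧ Q a b), card_filter, sum_mul]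
  refine sum_congr rfl fun a _ => ?_
  by_cases ha : P a
  · simp [ha, h a ha]
  · simp [ha]

theorem card_pairs_ne_zero_add_ne_zero (F : Type*) [Field F] [Fintype F] [DecidableEq F] :
    #{p : F × F | p.1 ≠ 0 ∧ p.2 ≠ 0 ∧ p.1 + p.2 ≠ 0} =
      (Fintype.card F - 1) * (Fintype.card F - 2) := by
  rw [card_filter_prod_of_card_fiber (P := fun a : F => a ≠ 0)
    (Q := fun a b : F => b ≠ 0 ∧ a + b ≠ 0) (m := Fintype.card F - 2), filter_ne',
    card_erase_of_mem (mem_univ _), card_univ]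
  intro a ha
  rw [← card_filter_ne_and_ne (x := (0 : F)) (y := -a) (by simpa [eq_comm] using ha)]
  exact congrArg card (filter_congr fun b _ => by simp only [ne_eq, add_eq_zero_iff_eq_neg'])

end Counting

section Hamming

variable {ι κ K : Type*} [Fintype ι] [Fintype κ] [Zero K] [DecidableEq K]

theorem hammingNorm_comp_equiv (e : ι ≃ κ) (v : κ → K) : hammingNorm (v ∘ e) = hammingNorm v :=
  card_equiv e (by simp)

theorem exists_support_eq_of_hammingNorm_eq_three [DecidableEq ι] {w : ι → K}
    (hw : hammingNorm w = 3) {x y : ι} (hxy : x ≠ y) (hx : w x ≠ 0) (hy : w y ≠ 0) :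
    ∃ u, u ≠ x ∧ u ≠ y ∧ ({t | w t ≠ 0} : Finset ι) = {x, y, u} := by
  set S : Finset ι := {t | w t ≠ 0}
  have hxyS : {x, y} ⊆ S := by simp [insert_subset_iff, S, hx, hy]
  obtain ⟨u, hu⟩ : ∃ u, S \ {x, y} = {u} := card_eq_one.mp <| by
    rw [card_sdiff_of_subset hxyS, card_pair hxy, show #S = 3 from hw]
  have huS : u ∉ ({x, y} : Finset ι) := (mem_sdiff.mp (hu ▸ mem_singleton_self u)).2
  refine ⟨u, by simp_all, by simp_all, ?_⟩
  rw [← union_sdiff_of_subset hxyS, hu]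
  ext; simp

end Hamming

section Groups

variable {G : Type*} [Group G]

theorem mem_zpowers_zpow_of_isCoprime {g : G} (hg : ∀ x, x ∈ Subgroup.zpowers g) {m : ℤ}
    (hm : IsCoprime (Nat.card G : ℤ) m) (x : G) : x ∈ Subgroup.zpowers (g ^ m) := by
  obtain ⟨a, b, hab⟩ := hm
  have hgm : g = (g ^ m) ^ b := by
    conv_lhs => rw [← zpow_one g, ← hab]
    rw [zpow_add, mul_comm a, zpow_mul, zpow_natCast, pow_card_eq_one', one_zpow, one_mul,
      ← zpow_mul, mul_comm]
  exact Subgroup.zpowers_le.mpr (Subgroup.mem_zpowers_iff.mpr ⟨b, hgm.symm⟩) (hg x)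

theorem bijective_fin_pow [Finite G] {g : G} (hg : ∀ x, x ∈ Subgroup.zpowers g) {n : ℕ}
    (hn : Nat.card G = n) : Function.Bijective fun i : Fin n => g ^ (i : ℕ) := by
  have hord : orderOf g = n := (orderOf_eq_card_of_forall_mem_zpowers hg).trans hn
  refine Function.Injective.bijective_of_nat_card_le (fun i j h => Fin.ext ?_) (by simp [hn])
  exact pow_injOn_Iio_orderOf (by simp [hord]) (by simp [hord]) h

end Groups

theorem isCoprime_pow_sub_one_sub_mul {q Δ e₁ e₂ : ℤ} {k : ℕ} (hq : q ≠ 1)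
    (hΔ : Δ * (q - 1) = q ^ k - 1) (h₁ : Int.gcd (q - 1) (k * e₁ - e₂) = 1)
    (h₂ : Int.gcd Δ e₂ = 1) : IsCoprime (q ^ k - 1) (e₂ - Δ * e₁) := by
  have hgeom : Δ = ∑ i ∈ range k, q ^ i :=
    mul_right_cancel₀ (sub_ne_zero.mpr hq) (hΔ.trans (geom_sum_mul q k).symm)
  obtain ⟨m, hm⟩ : q - 1 ∣ Δ - k := by
    rw [hgeom, show ∑ i ∈ range k, q ^ i - k = ∑ i ∈ range k, (q ^ i - 1) by
      rw [sum_sub_distrib, sum_const, card_range, nsmul_one]]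
    exact dvd_sum fun i _ => sub_one_dvd_pow_sub_one q i
  rw [← hΔ]
  refine IsCoprime.mul_left ?_ ?_
  · simpa [sub_eq_add_neg] using (Int.isCoprime_iff_gcd_eq_one.mpr h₂).add_mul_left_right (-e₁)
  · rw [show e₂ - Δ * e₁ = -(k * e₁ - e₂) + (q - 1) * -(m * e₁) by linear_combination -e₁ * hm]
    exact (Int.isCoprime_iff_gcd_eq_one.mpr h₁).neg_right.add_mul_left_right _

section FiniteFieldUnits

variable {F E : Type*} [Field F] [Field E] [Algebra F E] [Fintype F] [Fintype E]

theorem val_zpow_eq_algebraMap_norm {Δ : ℤ}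
    (hΔ : Δ * ((Fintype.card F : ℤ) - 1) = Fintype.card E - 1) (x : Eˣ) :
    ((x ^ Δ : Eˣ) : E) = algebraMap F E (Algebra.norm F (x : E)) := by
  have hF : 1 < Fintype.card F := Fintype.one_lt_card
  have hE : 0 < Fintype.card E := Fintype.card_pos
  obtain ⟨m, rfl⟩ : ∃ m : ℕ, Δ = m := Int.eq_ofNat_of_zero_le (by nlinarith)
  have hm : (Fintype.card E - 1) / (Fintype.card F - 1) = m := by
    refine Nat.div_eq_of_eq_mul_left (by omega) ?_
    zify [hF.le, hE]
    linarith
  rw [FiniteField.algebraMap_norm_eq_pow, Nat.card_eq_fintype_card, Nat.card_eq_fintype_card,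
    hm, zpow_natCast, Units.val_pow_eq_pow_val]

theorem exists_finEquiv_zpow_eq_algebraMap_mul {γ : Eˣ} (hγ : ∀ x, x ∈ Subgroup.zpowers γ)
    {Δ e₁ e₂ : ℤ} (hΔ : Δ * ((Fintype.card F : ℤ) - 1) = Fintype.card E - 1)
    (he : IsCoprime (Nat.card Eˣ : ℤ) (e₂ - Δ * e₁)) {n : ℕ} (hn : Nat.card Eˣ = n) :
    ∃ (z : Fin n ≃ Eˣ) (s : Fin n → F), (∀ i, s i ≠ 0) ∧
      (∀ i : Fin n, ((γ ^ (Δ * e₁ * (i : ℤ)) : Eˣ) : E) = algebraMap F E (s i)) ∧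
      (∀ i : Fin n, ((γ ^ (e₂ * (i : ℤ)) : Eˣ) : E) = algebraMap F E (s i) * z i) := by
  have hd := mem_zpowers_zpow_of_isCoprime hγ he
  have hα : ∀ i : Fin n, ((γ ^ (Δ * e₁ * (i : ℤ)) : Eˣ) : E) =
      algebraMap F E (Algebra.norm F (γ : E) ^ (e₁ * i)) := fun i => by
    rw [mul_assoc, zpow_mul, Units.val_zpow_eq_zpow_val, val_zpow_eq_algebraMap_norm hΔ,
      map_zpow₀]
  refine ⟨Equiv.ofBijective _ (bijective_fin_pow hd hn), _, fun i => zpow_ne_zero _ (by simp),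
    hα, fun i => ?_⟩
  rw [← hα, ← Units.val_mul, Equiv.ofBijective_apply, ← zpow_natCast, ← zpow_mul, ← zpow_add]
  ring_nf

end FiniteFieldUnits

section Trace

variable {F E ι : Type*} [Field F] [Field E] [Algebra F E] [FiniteDimensional F E]
  [Algebra.IsSeparable F E] [Fintype ι]

theorem forall_sum_mul_trace_eq_zero_iff (v : ι → F) (u : ι → E) :
    (∀ a : E, ∑ i, v i * Algebra.trace F E (a * u i) = 0) ↔ ∑ i, v i • u i = 0 := by
  have h : ∀ a, ∑ i, v i * Algebra.trace F E (a * u i) =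
      Algebra.trace F E (a * ∑ i, v i • u i) := fun a => by
    simp only [mul_sum, map_sum, mul_smul_comm, LinearMap.map_smul, smul_eq_mul]
  simp only [h]
  exact ⟨fun H => (traceForm_nondegenerate F E).2 _ H, fun H a => by simp [H]⟩

theorem forall_sum_mul_trace_add_eq_zero_iff (v : ι → F) (u t : ι → E) :
    (∀ a b : E, ∑ i, v i * Algebra.trace F E (a * u i + b * t i) = 0) ↔
      ∑ i, v i • u i = 0 ∧ ∑ i, v i • t i = 0 := by
  simp only [← forall_sum_mul_trace_eq_zero_iff, map_add, mul_add, sum_add_distrib]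
  refine ⟨fun H => ⟨fun a => by simpa using H a 0, fun b => by simpa using H 0 b⟩,
    fun H a b => by rw [H.1 a, H.2 b, add_zero]⟩

end Trace

section ParityCheck

variable (F E : Type*) [Field F] [Field E] [Algebra F E] [Fintype E] [DecidableEq E]

noncomputable def parityCheck : (Eˣ → F) →ₗ[F] F × E :=
  Fintype.linearCombination F fun x : Eˣ => ((1 : F), (x : E))

variable {F E}

theorem parityCheck_apply (w : Eˣ → F) :
    parityCheck F E w = (∑ x, w x, ∑ x, w x • (x : E)) := by
  ext <;> simp [parityCheck, Fintype.linearCombination_apply, Prod.fst_sum, Prod.snd_sum]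

theorem card_pairs_ne_smul_add_smul_ne_zero {a b : F} (ha : a ≠ 0) (hb : b ≠ 0)
    (hab : a + b ≠ 0) :
    #{p : Eˣ × Eˣ | p.2 ≠ p.1 ∧ a • (p.1 : E) + b • (p.2 : E) ≠ 0} =
      Fintype.card Eˣ * (Fintype.card Eˣ - 2) := by
  rw [card_filter_prod (fun x y : Eˣ => y ≠ x ∧ a • (x : E) + b • (y : E) ≠ 0), ← smul_eq_mul,
    ← card_univ, ← sum_const]
  refine sum_congr rfl fun x _ => ?_
  set u := Units.mk0 (b⁻¹ • -(a • (x : E)))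
    (smul_ne_zero (inv_ne_zero hb) (neg_ne_zero.mpr (smul_ne_zero ha x.ne_zero)))
  have hu : ∀ y : Eˣ, a • (x : E) + b • (y : E) = 0 ↔ y = u := fun y => by
    rw [← Units.val_inj, Units.val_mk0, eq_inv_smul_iff₀ hb, add_comm, eq_neg_iff_add_eq_zero]
  have hxu : x ≠ u := by
    rw [Ne, ← hu, ← add_smul]
    exact smul_ne_zero hab x.ne_zero
  rw [card_univ, ← card_filter_ne_and_ne hxu]
  exact congrArg card (filter_congr fun y _ => by simp only [ne_eq, hu])

variable [DecidableEq F]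

theorem parityCheck_eq_sum_support (w : Eˣ → F) :
    parityCheck F E w = ∑ x ∈ {x | w x ≠ 0}, w x • ((1 : F), (x : E)) := by
  rw [parityCheck, Fintype.linearCombination_apply]
  exact (sum_filter_of_ne fun x _ hx => by contrapose! hx; simp [hx]).symm

theorem parityCheck_ne_zero_of_hammingNorm_eq_one {w : Eˣ → F} (hw : hammingNorm w = 1) :
    parityCheck F E w ≠ 0 := by
  obtain ⟨x, hS⟩ := card_eq_one.mp hw
  have hx : x ∈ ({t | w t ≠ 0} : Finset Eˣ) := hS ▸ mem_singleton_self x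
  rw [parityCheck_eq_sum_support, hS, sum_singleton]
  intro h
  exact (mem_filter.mp hx).2 (by simpa using congrArg Prod.fst h)

theorem parityCheck_ne_zero_of_hammingNorm_eq_two {w : Eˣ → F} (hw : hammingNorm w = 2) :
    parityCheck F E w ≠ 0 := by
  obtain ⟨x, y, hxy, hS⟩ := card_eq_two.mp hw
  have hx : x ∈ ({t | w t ≠ 0} : Finset Eˣ) := hS ▸ mem_insert_self x {y}
  rw [parityCheck_eq_sum_support, hS, sum_pair hxy]
  intro h
  have h₁ : w x + w y = 0 := by simpa using congrArg Prod.fst h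
  have h₂ : w x • (x : E) + w y • (y : E) = 0 := by simpa using congrArg Prod.snd h
  rw [eq_neg_of_add_eq_zero_right h₁, neg_smul, ← sub_eq_add_neg, ← smul_sub, smul_eq_zero,
    sub_eq_zero, Units.val_inj] at h₂
  exact h₂.elim (mem_filter.mp hx).2 hxy

theorem parityCheck_eq_zero_iff_of_support_eq {w : Eˣ → F} {x y u : Eˣ} (hxy : x ≠ y)
    (hxu : x ≠ u) (hyu : y ≠ u) (hS : ({t | w t ≠ 0} : Finset Eˣ) = {x, y, u}) :
    parityCheck F E w = 0 ↔
      w x + w y + w u = 0 ∧ w x • (x : E) + w y • (y : E) + w u • (u : E) = 0 := by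
  rw [parityCheck_eq_sum_support, hS, sum_insert (by simp [hxy, hxu]), sum_pair hyu,
    Prod.ext_iff]
  simp [add_assoc]

theorem exists_third_point_of_parityCheck_eq_zero {w : Eˣ → F} (hw₃ : hammingNorm w = 3)
    (hw : parityCheck F E w = 0) {x y : Eˣ} (hxy : x ≠ y) (hx : w x ≠ 0) (hy : w y ≠ 0) :
    ∃ u, u ≠ x ∧ u ≠ y ∧ w u ≠ 0 ∧ ({t | w t ≠ 0} : Finset Eˣ) = {x, y, u} ∧
      w x + w y + w u = 0 ∧ w x • (x : E) + w y • (y : E) + w u • (u : E) = 0 := by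
  obtain ⟨u, hux, huy, hS⟩ := exists_support_eq_of_hammingNorm_eq_three hw₃ hxy hx hy
  have hu : u ∈ ({t | w t ≠ 0} : Finset Eˣ) := by simp [hS]
  exact ⟨u, hux, huy, (mem_filter.mp hu).2, hS,
    (parityCheck_eq_zero_iff_of_support_eq hxy hux.symm huy.symm hS).mp hw⟩

theorem exists_hammingNorm_eq_three_parityCheck_eq_zero {a b : F} {x y : Eˣ} (hxy : x ≠ y)
    (ha : a ≠ 0) (hb : b ≠ 0) (hab : a + b ≠ 0) (hxy' : a • (x : E) + b • (y : E) ≠ 0) :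
    ∃ w : Eˣ → F, (hammingNorm w = 3 ∧ parityCheck F E w = 0) ∧ w x = a ∧ w y = b := by
  set u : Eˣ := Units.mk0 ((a + b)⁻¹ • (a • (x : E) + b • (y : E)))
    (smul_ne_zero (inv_ne_zero hab) hxy')
  have hu : (a + b) • (u : E) = a • (x : E) + b • (y : E) := by
    simp only [u, Units.val_mk0, smul_smul, mul_inv_cancel₀ hab, one_smul]
  have hxu : x ≠ u := by
    intro h
    rw [← h, add_smul, add_right_inj, ← sub_eq_zero, ← smul_sub, smul_eq_zero, sub_eq_zero,
      Units.val_inj] at hu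
    exact hu.elim hb hxy
  have hyu : y ≠ u := by
    intro h
    rw [← h, add_smul, add_left_inj, ← sub_eq_zero, ← smul_sub, smul_eq_zero, sub_eq_zero,
      Units.val_inj] at hu
    exact hu.elim ha hxy.symm
  set w : Eˣ → F := Pi.single x a + Pi.single y b + Pi.single u (-(a + b))
  have hwx : w x = a := by simp [w, hxy, hxu]
  have hwy : w y = b := by simp [w, hxy.symm, hyu]
  have hwu : w u = -(a + b) := by simp [w, hxu.symm, hyu.symm]
  have hS : ({t | w t ≠ 0} : Finset Eˣ) = {x, y, u} := by
    ext t
    by_cases htx : t = x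
    · simp [htx, hwx, ha]
    by_cases hty : t = y
    · simp [hty, hwy, hb]
    by_cases htu : t = u
    · simp [htu, hwu, hab, -neg_add_rev]
    simp [w, htx, hty, htu]
  refine ⟨w, ⟨card_eq_three.mpr ⟨x, y, u, hxy, hxu, hyu, hS⟩, ?_⟩, hwx, hwy⟩
  rw [parityCheck_eq_zero_iff_of_support_eq hxy hxu hyu hS, hwx, hwy, hwu, neg_smul, hu]
  constructor <;> abel

theorem eq_of_parityCheck_eq_zero_of_apply_eq {w w' : Eˣ → F} (hw₃ : hammingNorm w = 3)
    (hw : parityCheck F E w = 0) (hw₃' : hammingNorm w' = 3) (hw' : parityCheck F E w' = 0)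
    {x y : Eˣ} (hxy : x ≠ y) (hx : w x ≠ 0) (hy : w y ≠ 0) (hwx : w x = w' x)
    (hwy : w y = w' y) : w = w' := by
  obtain ⟨u, -, -, hu, hS, h₁, h₂⟩ := exists_third_point_of_parityCheck_eq_zero hw₃ hw hxy hx hy
  obtain ⟨u', -, -, -, hS', h₁', h₂'⟩ :=
    exists_third_point_of_parityCheck_eq_zero hw₃' hw' hxy (hwx ▸ hx) (hwy ▸ hy)
  rw [hwx, hwy] at h₁ h₂
  have hwu : w u = w' u' := add_left_cancel (h₁.trans h₁'.symm)
  have huu' : u = u' := by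
    have h := add_left_cancel (h₂.trans h₂'.symm)
    rw [← hwu] at h
    exact Units.val_injective (smul_right_injective E hu h)
  subst huu'
  funext t
  by_cases ht : t ∈ ({x, y, u} : Finset Eˣ)
  · simp only [mem_insert, mem_singleton] at ht
    rcases ht with rfl | rfl | rfl
    exacts [hwx, hwy, hwu]
  · have h := hS ▸ ht
    have h' := hS' ▸ ht
    simp only [mem_filter, mem_univ, true_and, not_not] at h h'
    rw [h, h']

variable [Fintype F]

theorem card_sigma_offDiag_support_eq :
    #(({w | hammingNorm w = 3 ∧ parityCheck F E w = 0} : Finset (Eˣ → F)).sigma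
        fun w => ({t | w t ≠ 0} : Finset Eˣ).offDiag) =
      #{p : (F × F) × (Eˣ × Eˣ) | (p.1.1 ≠ 0 ∧ p.1.2 ≠ 0 ∧ p.1.1 + p.1.2 ≠ 0) ∧
        (p.2.2 ≠ p.2.1 ∧ p.1.1 • (p.2.1 : E) + p.1.2 • (p.2.2 : E) ≠ 0)} := by
  refine card_bij (fun p _ => ((p.1 p.2.1, p.1 p.2.2), p.2)) ?_ ?_ ?_
  · rintro ⟨w, x, y⟩ hp
    simp only [mem_sigma, mem_filter, mem_univ, true_and, mem_offDiag] at hp ⊢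
    obtain ⟨⟨hw₃, hw⟩, hx, hy, hxy⟩ := hp
    obtain ⟨u, -, -, hu, -, h₁, h₂⟩ :=
      exists_third_point_of_parityCheck_eq_zero hw₃ hw hxy hx hy
    refine ⟨⟨hx, hy, fun h => ?_⟩, hxy.symm, fun h => ?_⟩
    · rw [h, zero_add] at h₁
      exact hu h₁
    · rw [h, zero_add] at h₂
      exact smul_ne_zero hu u.ne_zero h₂
  · rintro ⟨w, x, y⟩ hp ⟨w', x', y'⟩ hp' heq
    simp only [Prod.mk.injEq] at heq
    obtain ⟨⟨hwx, hwy⟩, rfl, rfl⟩ := heq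
    simp only [mem_sigma, mem_filter, mem_univ, true_and, mem_offDiag] at hp hp'
    obtain ⟨⟨hw₃, hw⟩, hx, hy, hxy⟩ := hp
    obtain ⟨⟨hw₃', hw'⟩, -⟩ := hp'
    rw [eq_of_parityCheck_eq_zero_of_apply_eq hw₃ hw hw₃' hw' hxy hx hy hwx hwy]
  · rintro ⟨⟨a, b⟩, x, y⟩ hp
    simp only [mem_filter, mem_univ, true_and] at hp
    obtain ⟨⟨ha, hb, hab⟩, hyx, hxy⟩ := hp
    obtain ⟨w, hw, rfl, rfl⟩ :=
      exists_hammingNorm_eq_three_parityCheck_eq_zero hyx.symm ha hb hab hxy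
    exact ⟨⟨w, x, y⟩, by simp [hw, ha, hb, hyx.symm], rfl⟩

theorem six_mul_card_hammingNorm_eq_three_parityCheck_eq_zero :
    6 * #{w : Eˣ → F | hammingNorm w = 3 ∧ parityCheck F E w = 0} =
      (Fintype.card F - 1) * (Fintype.card F - 2) *
        (Fintype.card Eˣ * (Fintype.card Eˣ - 2)) := by
  calc 6 * #{w : Eˣ → F | hammingNorm w = 3 ∧ parityCheck F E w = 0}
      = #(({w | hammingNorm w = 3 ∧ parityCheck F E w = 0} : Finset (Eˣ → F)).sigma
          fun w => ({t | w t ≠ 0} : Finset Eˣ).offDiag) := by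
        rw [card_sigma, sum_const_nat fun w hw => ?_, mul_comm]
        rw [offDiag_card, show #{t | w t ≠ 0} = 3 from (mem_filter.mp hw).2.1]
    _ = _ := card_sigma_offDiag_support_eq
    _ = _ := by
        rw [card_filter_prod_of_card_fiber
          (P := fun p : F × F => p.1 ≠ 0 ∧ p.2 ≠ 0 ∧ p.1 + p.2 ≠ 0)
          (Q := fun (p : F × F) (xy : Eˣ × Eˣ) =>
            xy.2 ≠ xy.1 ∧ p.1 • (xy.1 : E) + p.2 • (xy.2 : E) ≠ 0)
          fun p hp => card_pairs_ne_smul_add_smul_ne_zero hp.1 hp.2.1 hp.2.2,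
          card_pairs_ne_zero_add_ne_zero]

theorem ncard_traceDual_eq_card_parityCheck {ι : Type*} [Fintype ι] (z : ι ≃ Eˣ) {s : ι → F}
    (hs : ∀ i, s i ≠ 0) {α β : ι → E} (hα : ∀ i, α i = algebraMap F E (s i))
    (hβ : ∀ i, β i = algebraMap F E (s i) * z i) (j : ℕ) :
    {v : ι → F | hammingNorm v = j ∧
        ∀ a b : E, ∑ i, v i * Algebra.trace F E (a * α i + b * β i) = 0}.ncard =
      #{w : Eˣ → F | hammingNorm w = j ∧ parityCheck F E w = 0} := by
  set Φ : (ι → F) ≃ (Eˣ → F) :=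
    (Equiv.piCongrRight fun i => Equiv.mulLeft₀ (s i) (hs i)).trans (z.arrowCongr (.refl F))
  have hΦ : ∀ v, Φ v = (fun i => s i * v i) ∘ z.symm := fun v => rfl
  have hnorm : ∀ v, hammingNorm (Φ v) = hammingNorm v := fun v => by
    rw [hΦ, hammingNorm_comp_equiv]
    exact hammingNorm_comp (fun i => (s i * ·)) (fun i => mul_right_injective₀ (hs i))
      fun i => mul_zero _
  have hcheck : ∀ v, (∀ a b : E, ∑ i, v i * Algebra.trace F E (a * α i + b * β i) = 0) ↔
      parityCheck F E (Φ v) = 0 := fun v => by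
    have h₁ : ∑ i, v i • α i = algebraMap F E (∑ i, s i * v i) := by
      simp [hα, map_sum, Algebra.smul_def, mul_comm]
    have h₂ : ∀ i, v i • β i = (s i * v i) • (z i : E) := fun i => by
      rw [hβ, Algebra.smul_def, Algebra.smul_def, map_mul]
      ring
    rw [forall_sum_mul_trace_add_eq_zero_iff, parityCheck_apply, Prod.mk_eq_zero,
      ← Equiv.sum_comp z, ← Equiv.sum_comp z (fun x => Φ v x • (x : E)), h₁, map_eq_zero]
    simp only [h₂, hΦ, Function.comp_apply, Equiv.symm_apply_apply]
  rw [← Set.ncard_coe_finset, ← Set.ncard_preimage_of_injective_subset_range Φ.injective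
    (by simp)]
  congr 1
  ext v
  simp [hnorm, ← hcheck]

end ParityCheck

theorem dual_code_low_weights_general
    (q k : ℕ)
    (F E : Type*) [Field F] [Fintype F] [DecidableEq F] [Field E] [Fintype E] [Algebra F E]
    (hcard : Fintype.card F = q) (hE : Fintype.card E = q ^ k)
    (γ : Eˣ) (hγ : ∀ x : Eˣ, x ∈ Subgroup.zpowers γ)
    (Δ e₁ e₂ : ℤ) (hΔ : Δ * ((q : ℤ) - 1) = (q : ℤ) ^ k - 1)
    (hgcd : Int.gcd ((q : ℤ) - 1) ((k : ℤ) * e₁ - e₂) = 1)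
    (he₂ : Int.gcd Δ e₂ = 1)
    (C : Set (Fin (q ^ k - 1) → F))
    (hC : C = {c : Fin (q ^ k - 1) → F | ∃ a b : E,
      c = fun i : Fin (q ^ k - 1) => Algebra.trace F E
        (a * ((γ ^ (Δ * e₁ * (i : ℤ)) : Eˣ) : E) + b * ((γ ^ (e₂ * (i : ℤ)) : Eˣ) : E))})
    (B : ℕ → ℕ)
    (hB : ∀ j : ℕ, B j = {v : Fin (q ^ k - 1) → F | hammingNorm v = j ∧
      ∀ c ∈ C, ∑ i, v i * c i = 0}.ncard) :
    B 1 = 0 ∧ B 2 = 0 ∧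
      6 * B 3 = (q ^ k - 3) * (q ^ k - 1) * (q - 2) * (q - 1) := by
  classical
  have hq : 1 < q := hcard ▸ Fintype.one_lt_card
  have hcardE : Fintype.card Eˣ = q ^ k - 1 := by rw [Fintype.card_units, hE]
  have hnE : Nat.card Eˣ = q ^ k - 1 := by rw [Nat.card_eq_fintype_card, hcardE]
  have hcop : IsCoprime (Nat.card Eˣ : ℤ) (e₂ - Δ * e₁) := by
    rw [hnE, Nat.cast_sub (Nat.one_le_pow _ _ (by omega))]
    push_cast
    exact isCoprime_pow_sub_one_sub_mul (by omega) hΔ hgcd he₂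
  obtain ⟨z, s, hs, hα, hβ⟩ := exists_finEquiv_zpow_eq_algebraMap_mul hγ
    (by rw [hcard, hE]; push_cast; exact hΔ) hcop hnE
  have hB' : ∀ j, B j = #{w : Eˣ → F | hammingNorm w = j ∧ parityCheck F E w = 0} := fun j => by
    rw [hB, ← ncard_traceDual_eq_card_parityCheck z hs hα hβ, hC]
    congr 1
    ext v
    refine and_congr_right fun _ => ⟨fun h a b => h _ ⟨a, b, rfl⟩, ?_⟩
    rintro h _ ⟨a, b, rfl⟩
    exact h a b
  refine ⟨?_, ?_, ?_⟩
  · rw [hB', card_eq_zero, filter_eq_empty_iff]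
    exact fun w _ h => parityCheck_ne_zero_of_hammingNorm_eq_one h.1 h.2
  · rw [hB', card_eq_zero, filter_eq_empty_iff]
    exact fun w _ h => parityCheck_ne_zero_of_hammingNorm_eq_two h.1 h.2
  · rw [hB', six_mul_card_hammingNorm_eq_three_parityCheck_eq_zero, hcard, hcardE,
      show q ^ k - 1 - 2 = q ^ k - 3 by omega]
    ring

/-- The dual code of `C_{(Δe₁, e₂)}` has `B₁ = B₂ = 0` and
`B₃ = (q^k − 3)(q^k − 1)(q − 2)(q − 1)/6` (Part (B) of Theorem 1 of the paper). -/
theorem dual_code_low_weights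
    (q k : ℕ) (hk : 1 < k)
    (F E : Type*) [Field F] [Fintype F] [DecidableEq F] [Field E] [Fintype E] [Algebra F E]
    (hcard : Fintype.card F = q) (hE : Fintype.card E = q ^ k)
    (γ : Eˣ) (hγ : ∀ x : Eˣ, x ∈ Subgroup.zpowers γ)
    (Δ e₁ e₂ : ℤ) (hΔ : Δ * ((q : ℤ) - 1) = (q : ℤ) ^ k - 1)
    (hgcd : Int.gcd ((q : ℤ) - 1) ((k : ℤ) * e₁ - e₂) = 1)
    (he₂ : Int.gcd Δ e₂ = 1)
    (C : Set (Fin (q ^ k - 1) → F))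
    (hC : C = {c : Fin (q ^ k - 1) → F | ∃ a b : E,
      c = fun i : Fin (q ^ k - 1) => Algebra.trace F E
        (a * ((γ ^ (Δ * e₁ * (i : ℤ)) : Eˣ) : E) + b * ((γ ^ (e₂ * (i : ℤ)) : Eˣ) : E))})
    (B : ℕ → ℕ)
    (hB : ∀ j : ℕ, B j = {v : Fin (q ^ k - 1) → F | hammingNorm v = j ∧
      ∀ c ∈ C, ∑ i, v i * c i = 0}.ncard) :
    B 1 = 0 ∧ B 2 = 0 ∧
      6 * B 3 = (q ^ k - 3) * (q ^ k - 1) * (q - 2) * (q - 1) :=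
  dual_code_low_weights_general q k F E hcard hE γ hγ Δ e₁ e₂ hΔ hgcd he₂ C hC B hB
end

section
/- Let q be a prime power, k > 1, Δ = (q^k − 1)/(q − 1), γ a primitive element of F_{q^k}, and for an integer a let h_a(x) ∈ F_q[x] be the minimal polynomial of γ^{−a} over F_q. Then the number of distinct polynomials of the form h_{Δe₁}(x)·h_{e₂}(x), where e₁ and e₂ range over all integers satisfying gcd(q − 1, k·e₁ − e₂) = 1 and gcd(Δ, e₂) = 1, equals φ(q^k − 1)·(q − 1)/k, where φ is the Euler totient function. (Equivalently, this is the number of distinct cyclic codes C_{(Δe₁, e₂)} of length q^k − 1 and dimension k + 1 satisfying the two conditions.) -/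
/-!
Write `n = q^k - 1 = Δ (q - 1)`. Since `Δ ≡ k (mod q - 1)`, the two coprimality conditions on
`(e₁, e₂)` together say that `Δ e₁ - e₂` is prime to `n`, i.e. that `y = γ^(Δ e₁ - e₂)` generates
`E^×`. As `a = γ^(-Δ e₁)` runs through `F^×`, the polynomials counted are therefore the products
`(X - a) · minpoly (a y)` with `a ∈ F^×` and `y` a generator of `E^×`, and there are `(q - 1) φ(n)`
such pairs. Two pairs give the same product iff they share `a` and their `y` are conjugate under
`Gal(E/F)`, a group of order `k` acting freely on the generators of `E^×`.
-/

open Polynomial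

theorem sub_one_dvd_geom_sum_sub_card {R : Type*} [CommRing R] (x : R) (k : ℕ) :
    x - 1 ∣ ∑ i ∈ Finset.range k, x ^ i - k := by
  have : ∑ i ∈ Finset.range k, x ^ i - k = ∑ i ∈ Finset.range k, (x ^ i - 1) := by
    simp [Finset.sum_sub_distrib]
  rw [this]
  exact Finset.dvd_sum fun i _ => sub_one_dvd_pow_sub_one x i

theorem isCoprime_and_isCoprime_iff_isCoprime_mul {m Δ k : ℤ} (h : m ∣ Δ - k) (e₁ e₂ : ℤ) :
    IsCoprime m (k * e₁ - e₂) ∧ IsCoprime Δ e₂ ↔ IsCoprime (Δ * m) (Δ * e₁ - e₂) := by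
  obtain ⟨c, hc⟩ := h
  rw [IsCoprime.mul_left_iff, and_comm]
  refine Iff.and ?_ ?_
  · rw [show Δ * e₁ - e₂ = -e₂ + Δ * e₁ by ring, IsCoprime.add_mul_left_right_iff,
      IsCoprime.neg_right_iff]
  · rw [show Δ * e₁ - e₂ = k * e₁ - e₂ + m * (c * e₁) by linear_combination e₁ * hc,
      IsCoprime.add_mul_left_right_iff]

theorem forall_mem_zpowers_iff_orderOf_eq_card {G : Type*} [Group G] [Finite G] {y : G} :
    (∀ x, x ∈ Subgroup.zpowers y) ↔ orderOf y = Nat.card G :=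
  ⟨orderOf_eq_card_of_forall_mem_zpowers, fun h x => by
    rw [Subgroup.eq_top_of_card_eq (Subgroup.zpowers y) (by rw [Nat.card_zpowers, h])]
    trivial⟩

theorem forall_mem_zpowers_zpow_iff {G : Type*} [Group G] {γ : G}
    (hγ : ∀ x, x ∈ Subgroup.zpowers γ) (t : ℤ) :
    (∀ x, x ∈ Subgroup.zpowers (γ ^ t)) ↔ IsCoprime t (orderOf γ) := by
  rw [Int.isCoprime_iff_gcd_eq_one, ← mem_zpowers_zpow_iff]
  exact ⟨fun h => h γ, fun h x => Subgroup.zpowers_le.mpr h (hγ x)⟩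

namespace Finset

theorem card_image_mul_of_card_fiber {α β : Type*} [DecidableEq β] {s : Finset α}
    {f : α → β} {k : ℕ} (h : ∀ a ∈ s, #{b ∈ s | f b = f a} = k) : #(s.image f) * k = #s := by
  rw [card_eq_sum_card_image f s, sum_const_nat]
  intro b hb
  obtain ⟨a, ha, rfl⟩ := mem_image.mp hb
  exact h a ha

end Finset

theorem eq_and_eq_of_X_sub_C_mul_eq {K : Type*} [Field K] {a a' : K} {g g' : K[X]}
    (hg' : Irreducible g') (hdeg : g'.natDegree ≠ 1)
    (h : (X - C a) * g = (X - C a') * g') : a = a' ∧ g = g' := by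
  have hdvd : X - C a ∣ (X - C a') * g' := h ▸ dvd_mul_right _ _
  have ha : a = a' := by
    rcases (prime_X_sub_C a).dvd_or_dvd hdvd with hd | hd
    · simpa [sub_eq_zero, eq_comm] using (dvd_iff_isRoot.mp hd)
    · exact absurd (natDegree_eq_of_degree_eq_some
        (degree_eq_one_of_irreducible_of_root hg' (dvd_iff_isRoot.mp hd))) hdeg
  subst ha
  exact ⟨rfl, mul_left_cancel₀ (X_sub_C_ne_zero a) h⟩

theorem AlgEquiv.injective_apply_of_forall_mem_zpowers {F E : Type*} [Field F] [Field E]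
    [Algebra F E] {y : Eˣ} (hy : ∀ x, x ∈ Subgroup.zpowers y) :
    Function.Injective fun σ : Gal(E/F) => σ y := by
  intro σ τ h
  ext x
  rcases eq_or_ne x 0 with rfl | hx
  · simp
  obtain ⟨t, ht⟩ := Subgroup.mem_zpowers_iff.mp (hy (Units.mk0 x hx))
  have := congrArg (· ^ t) h
  simp only [← map_zpow₀] at this
  rwa [← Units.val_zpow_eq_zpow_val, ht, Units.val_mk0] at this

section ParityCheck

variable {F E : Type*} [Field F] [Field E] [Algebra F E]

variable (F) in
noncomputable def parityCheckPoly (a : Fˣ) (y : Eˣ) : F[X] :=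
  (X - C (a : F)) * minpoly F (algebraMap F E a * y)

theorem minpoly_mul_minpoly_zpow_eq_parityCheckPoly {γ : Eˣ} {c : ℤ} {a : Fˣ}
    (ha : algebraMap F E a = ((γ ^ (-c) : Eˣ) : E)) (e : ℤ) :
    minpoly F ((γ ^ (-c) : Eˣ) : E) * minpoly F ((γ ^ (-e) : Eˣ) : E) =
      parityCheckPoly F a (γ ^ (c - e)) := by
  rw [parityCheckPoly, ha, ← Units.val_mul, ← zpow_add, show -c + (c - e) = -e by ring, ← ha,
    minpoly.eq_X_sub_C]

variable [Fintype F] [Finite E]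

theorem FiniteField.mem_range_algebraMap_of_pow_card_eq_self {x : E}
    (hx : x ^ Fintype.card F = x) : x ∈ Set.range (algebraMap F E) := by
  have : x ∈ (⊥ : IntermediateField F E) := (IsGalois.mem_bot_iff_fixed x).mpr fun σ => by
    obtain ⟨j, rfl⟩ := (FiniteField.bijective_frobeniusAlgEquivOfAlgebraic_pow F E).2 σ
    rw [AlgEquiv.coe_pow, FiniteField.coe_frobeniusAlgEquivOfAlgebraic]
    exact Function.iterate_fixed hx j
  exact IntermediateField.mem_bot.mp this

theorem range_algebraMap_units_eq_range_zpow {γ : Eˣ} (hγ : ∀ x, x ∈ Subgroup.zpowers γ) {Δ : ℤ}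
    (hΔ : Δ * ((Fintype.card F : ℤ) - 1) = Nat.card Eˣ) :
    Set.range (fun a : Fˣ => algebraMap F E a) =
      Set.range fun e : ℤ => ((γ ^ (Δ * e) : Eˣ) : E) := by
  have hm : ((Fintype.card F - 1 : ℕ) : ℤ) = (Fintype.card F : ℤ) - 1 := by
    have := Fintype.card_pos (α := F); omega
  have hord : (orderOf γ : ℤ) = Δ * (Fintype.card F - 1 : ℕ) := by
    rw [hm, hΔ, orderOf_eq_card_of_forall_mem_zpowers hγ]
  ext x
  constructor
  · rintro ⟨a, rfl⟩
    obtain ⟨j, hj⟩ := Subgroup.mem_zpowers_iff.mp (hγ (Units.mk0 (algebraMap F E a) (by simp)))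
    have h1 : (γ ^ j) ^ (Fintype.card F - 1) = 1 := by
      ext
      rw [hj, Units.val_pow_eq_pow_val, Units.val_mk0, ← map_pow,
        FiniteField.pow_card_sub_one_eq_one _ a.ne_zero, map_one, Units.val_one]
    rw [← zpow_natCast, ← zpow_mul, ← orderOf_dvd_iff_zpow_eq_one, hord] at h1
    obtain ⟨e, he⟩ :=
      (mul_dvd_mul_iff_right (by have := Fintype.one_lt_card (α := F); omega)).mp h1
    refine ⟨e, ?_⟩
    beta_reduce
    rw [← he, hj, Units.val_mk0]
  · rintro ⟨e, rfl⟩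
    obtain ⟨b, hb⟩ : ((γ ^ (Δ * e) : Eˣ) : E) ∈ Set.range (algebraMap F E) := by
      refine FiniteField.mem_range_algebraMap_of_pow_card_eq_self ?_
      have : (γ ^ (Δ * e)) ^ (Fintype.card F - 1) = 1 := by
        rw [← zpow_natCast, ← zpow_mul, ← orderOf_dvd_iff_zpow_eq_one, hord]
        exact ⟨e, by ring⟩
      rw [← Units.val_pow_eq_pow_val, ← Nat.sub_add_cancel Fintype.card_pos, pow_succ, this,
        one_mul]
    have hb0 : b ≠ 0 := by
      rintro rfl
      exact (γ ^ (Δ * e)).ne_zero (by rw [← hb, map_zero])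
    exact ⟨Units.mk0 b hb0, hb⟩

theorem natDegree_minpoly_algebraMap_mul_ne_one (hk : 1 < Module.finrank F E) (a : Fˣ)
    {y : Eˣ} (hy : ∀ x, x ∈ Subgroup.zpowers y) :
    (minpoly F (algebraMap F E a * y)).natDegree ≠ 1 := by
  -- otherwise `y` lies in `F`, so its order `q ^ k - 1` divides `q - 1`
  intro h
  obtain ⟨b, hb⟩ := minpoly.natDegree_eq_one_iff.mp h
  have hy1 : y ^ (Fintype.card F - 1) = 1 := by
    have hyb : (y : E) = algebraMap F E ((a : F)⁻¹ * b) := by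
      rw [map_mul, hb, ← mul_assoc, ← map_mul, inv_mul_cancel₀ a.ne_zero, map_one, one_mul]
    have hb0 : (a : F)⁻¹ * b ≠ 0 := by
      rintro h0
      rw [h0, map_zero] at hyb
      exact y.ne_zero hyb
    ext
    rw [Units.val_pow_eq_pow_val, Units.val_one, hyb, ← map_pow,
      FiniteField.pow_card_sub_one_eq_one _ hb0, map_one]
  have hle := Nat.le_of_dvd (Nat.sub_pos_of_lt (Fintype.one_lt_card (α := F)))
    (orderOf_dvd_of_pow_eq_one hy1)
  have : Fintype E := Fintype.ofFinite E
  rw [orderOf_eq_card_of_forall_mem_zpowers hy, Nat.card_units, Nat.card_eq_fintype_card,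
    Module.card_eq_pow_finrank (K := F)] at hle
  have := Nat.pow_lt_pow_right (Fintype.one_lt_card (α := F)) hk
  rw [pow_one] at this
  have := Fintype.card_pos (α := F)
  omega

theorem parityCheckPoly_eq_iff (hk : 1 < Module.finrank F E) {a a' : Fˣ} {y y' : Eˣ}
    (hy : ∀ x, x ∈ Subgroup.zpowers y) :
    parityCheckPoly F a' y' = parityCheckPoly F a y ↔ a' = a ∧ ∃ σ : Gal(E/F), σ y = y' := by
  constructor
  · intro h
    obtain ⟨ha, hg⟩ := eq_and_eq_of_X_sub_C_mul_eq (minpoly.irreducible (.of_finite F _))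
      (natDegree_minpoly_algebraMap_mul_ne_one hk a hy) h
    obtain rfl : a' = a := Units.ext ha
    obtain ⟨σ, hσ⟩ := (Normal.minpoly_eq_iff_mem_orbit E).mp hg
    refine ⟨rfl, σ, mul_left_cancel₀ (by simp : algebraMap F E a' ≠ 0) ?_⟩
    simpa only [AlgEquiv.smul_def, map_mul, AlgEquiv.commutes] using hσ
  · rintro ⟨rfl, σ, hσ⟩
    rw [parityCheckPoly, parityCheckPoly, ← hσ, ← minpoly.algEquiv_eq σ (algebraMap F E a' * y),
      map_mul, σ.commutes]

theorem ncard_image_parityCheckPoly_mul_finrank (hk : 1 < Module.finrank F E) :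
    ((fun w : Fˣ × Eˣ => parityCheckPoly F w.1 w.2) ''
        {w | ∀ x, x ∈ Subgroup.zpowers w.2}).ncard * Module.finrank F E =
      (Fintype.card F - 1) * Nat.totient (Nat.card E - 1) := by
  classical
  have : Fintype E := Fintype.ofFinite E
  set D : Finset (Fˣ × Eˣ) :=
    Finset.univ ×ˢ Finset.univ.filter fun y => ∀ x, x ∈ Subgroup.zpowers y
  have hD : {w : Fˣ × Eˣ | ∀ x, x ∈ Subgroup.zpowers w.2} = D := by ext; simp [D]
  rw [hD, ← Finset.coe_image, Set.ncard_coe_finset, Finset.card_image_mul_of_card_fiber]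
  · simp only [D, Finset.card_product, Finset.card_univ, forall_mem_zpowers_iff_orderOf_eq_card,
      Nat.card_eq_fintype_card]
    rw [IsCyclic.card_orderOf_eq_totient dvd_rfl, Fintype.card_units, Fintype.card_units]
  · rintro ⟨a, y⟩ hw
    have hy : ∀ x, x ∈ Subgroup.zpowers y := by simpa [D] using hw
    have hfiber : {w ∈ D | parityCheckPoly F w.1 w.2 = parityCheckPoly F a y} =
        Finset.univ.image fun σ : Gal(E/F) => (a, Units.map (σ : E →* E) y) := by
      ext ⟨a', y'⟩
      simp only [D, Finset.mem_filter, Finset.mem_product, Finset.mem_univ, true_and,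
        Finset.mem_image, parityCheckPoly_eq_iff hk hy, Prod.mk.injEq]
      constructor
      · rintro ⟨-, rfl, σ, hσ⟩
        exact ⟨σ, rfl, Units.ext hσ⟩
      · rintro ⟨σ, rfl, rfl⟩
        refine ⟨forall_mem_zpowers_iff_orderOf_eq_card.mpr ?_, rfl, σ, rfl⟩
        rw [orderOf_injective _ (Units.map_injective σ.injective) y,
          forall_mem_zpowers_iff_orderOf_eq_card.mp hy]
    rw [hfiber, Finset.card_image_of_injective, Finset.card_univ, ← Nat.card_eq_fintype_card,
      IsGalois.card_aut_eq_finrank]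
    intro σ τ h
    exact AlgEquiv.injective_apply_of_forall_mem_zpowers hy
      (congrArg Units.val (Prod.mk.inj h).2)

theorem setOf_parityCheck_eq_image {γ : Eˣ} (hγ : ∀ x, x ∈ Subgroup.zpowers γ) {Δ k : ℤ}
    (hΔ : Δ * ((Fintype.card F : ℤ) - 1) = Nat.card Eˣ)
    (hΔk : (Fintype.card F : ℤ) - 1 ∣ Δ - k) :
    {h : F[X] | ∃ e₁ e₂ : ℤ,
        Int.gcd ((Fintype.card F : ℤ) - 1) (k * e₁ - e₂) = 1 ∧ Int.gcd Δ e₂ = 1 ∧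
        h = minpoly F ((γ ^ (-(Δ * e₁)) : Eˣ) : E) * minpoly F ((γ ^ (-e₂) : Eˣ) : E)} =
      (fun w : Fˣ × Eˣ => parityCheckPoly F w.1 w.2) '' {w | ∀ x, x ∈ Subgroup.zpowers w.2} := by
  have hrange := range_algebraMap_units_eq_range_zpow hγ hΔ
  have hcond (e₁ e₂ : ℤ) :
      Int.gcd ((Fintype.card F : ℤ) - 1) (k * e₁ - e₂) = 1 ∧ Int.gcd Δ e₂ = 1 ↔
        ∀ x, x ∈ Subgroup.zpowers (γ ^ (Δ * e₁ - e₂)) := by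
    rw [forall_mem_zpowers_zpow_iff hγ, orderOf_eq_card_of_forall_mem_zpowers hγ, ← hΔ,
      isCoprime_comm, ← isCoprime_and_isCoprime_iff_isCoprime_mul hΔk,
      Int.isCoprime_iff_gcd_eq_one, Int.isCoprime_iff_gcd_eq_one]
  ext h
  constructor
  · rintro ⟨e₁, e₂, h₁, h₂, rfl⟩
    obtain ⟨a, ha⟩ : ((γ ^ (-(Δ * e₁)) : Eˣ) : E) ∈ Set.range fun a : Fˣ => algebraMap F E a :=
      hrange ▸ ⟨-e₁, by simp only [mul_neg]⟩
    exact ⟨(a, γ ^ (Δ * e₁ - e₂)), (hcond e₁ e₂).mp ⟨h₁, h₂⟩,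
      (minpoly_mul_minpoly_zpow_eq_parityCheckPoly ha e₂).symm⟩
  · rintro ⟨⟨a, y⟩, hy, rfl⟩
    obtain ⟨t, rfl⟩ := Subgroup.mem_zpowers_iff.mp (hγ y)
    obtain ⟨e, he⟩ : algebraMap F E a ∈ Set.range fun e : ℤ => ((γ ^ (Δ * e) : Eˣ) : E) :=
      hrange ▸ ⟨a, rfl⟩
    have ha : algebraMap F E a = ((γ ^ (-(Δ * -e)) : Eˣ) : E) := by rw [← he, mul_neg, neg_neg]
    have ht : Δ * -e - (Δ * -e - t) = t := by ring
    refine ⟨-e, Δ * -e - t, ?_⟩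
    rw [← and_assoc, hcond, ht, minpoly_mul_minpoly_zpow_eq_parityCheckPoly ha, ht]
    exact ⟨hy, rfl⟩

end ParityCheck

/-- The number of distinct parity-check polynomials `h_{Δe₁}(x)·h_{e₂}(x)`, where
`e₁, e₂` range over the integers with `gcd(q − 1, k·e₁ − e₂) = 1` and `gcd(Δ, e₂) = 1`,
equals `φ(q^k − 1)·(q − 1)/k` (Theorem 5 of the paper). -/
theorem count_parity_check_polynomials
    (q k : ℕ) (hk : 1 < k)
    (F E : Type*) [Field F] [Fintype F] [Field E] [Fintype E] [Algebra F E]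
    (hcard : Fintype.card F = q) (hE : Fintype.card E = q ^ k)
    (γ : Eˣ) (hγ : ∀ x : Eˣ, x ∈ Subgroup.zpowers γ)
    (Δ : ℤ) (hΔ : Δ * ((q : ℤ) - 1) = (q : ℤ) ^ k - 1) :
    {h : Polynomial F | ∃ e₁ e₂ : ℤ,
        Int.gcd ((q : ℤ) - 1) ((k : ℤ) * e₁ - e₂) = 1 ∧ Int.gcd Δ e₂ = 1 ∧
        h = minpoly F ((γ ^ (-(Δ * e₁)) : Eˣ) : E) * minpoly F ((γ ^ (-e₂) : Eˣ) : E)}.ncard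
      * k = Nat.totient (q ^ k - 1) * (q - 1) := by
  subst hcard
  have hq := Fintype.one_lt_card (α := F)
  have hrank : Module.finrank F E = k := by
    rw [Module.card_eq_pow_finrank (K := F) (V := E)] at hE
    exact Nat.pow_right_injective hq hE
  have hunits : (Nat.card Eˣ : ℤ) = (Fintype.card F : ℤ) ^ k - 1 := by
    rw [Nat.card_units, Nat.card_eq_fintype_card, hE,
      Nat.cast_sub (Nat.one_le_pow _ _ (by omega)), Nat.cast_pow, Nat.cast_one]
  have hgeom : Δ = ∑ i ∈ Finset.range k, (Fintype.card F : ℤ) ^ i :=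
    mul_right_cancel₀ (by omega) (hΔ.trans (geom_sum_mul _ k).symm)
  have hcount := ncard_image_parityCheckPoly_mul_finrank (F := F) (E := E) (hrank ▸ hk)
  rw [hrank, Nat.card_eq_fintype_card, hE] at hcount
  rw [setOf_parityCheck_eq_image hγ (hΔ.trans hunits.symm)
      (hgeom ▸ sub_one_dvd_geom_sum_sub_card _ k), hcount, mul_comm]
end

section
/- Let q be a prime power, k ≥ 1, Δ = (q^k − 1)/(q − 1), and γ a primitive element of F_{q^k}. Then the number of distinct minimal polynomials over F_q of elements γ^{−e}, where e ranges over all integers with gcd(Δ, e) = 1, equals φ(Δ)·(q − 1)/k, where φ is the Euler totient function. -/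
/-!
Let `T` be the set of `γ ^ e` with `e` coprime to `Δ` (replacing `e` by `-e` does not change it).
As `γ` has order `Δ (q - 1)`, reducing exponents modulo `Δ (q - 1)` gives `|T| = φ(Δ) (q - 1)`.
The set `T` is stable under the Frobenius `x ↦ x ^ q`, and each `x ∈ T` has order divisible by
`Δ`, which exceeds `q ^ d - 1` for `0 < d < k`; so `x, x ^ q, …, x ^ q ^ (k - 1)` are distinct.
They all have the minimal polynomial of `x`, which has at most `k` roots, so each fibre of
`x ↦ minpoly x` on `T` has exactly `k` elements.
-/

theorem Nat.count_coprime_mul (a c : ℕ) : Nat.count a.Coprime (a * c) = a.totient * c := by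
  induction c with
  | zero => simp
  | succ c ih =>
    rw [mul_add_one, Nat.count_add, ih, mul_add_one, Nat.totient,
      ← Nat.count_eq_card_filter_range]
    simp only [Nat.coprime_mul_left_add_right]

theorem Nat.coprime_pow_sub_one_self {q k : ℕ} (hq : 0 < q) (hk : k ≠ 0) :
    (q ^ k - 1).Coprime q :=
  Nat.Coprime.coprime_dvd_right (dvd_pow_self q hk)
    ((Nat.coprime_self_sub_left (Nat.one_le_pow _ _ hq)).mpr (Nat.coprime_one_left _))

theorem Nat.pow_lt_of_mul_sub_one_eq {q k Δ d : ℕ} (hq : 2 ≤ q)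
    (hΔ : Δ * (q - 1) = q ^ k - 1) (hd : 0 < d) (hdk : d < k) : q ^ d < Δ := by
  have h1 : q ^ d * q ≤ q ^ k := pow_succ q d ▸ Nat.pow_le_pow_right (by omega) hdk
  have h2 : q ≤ q ^ d := Nat.le_self_pow hd.ne' q
  obtain ⟨r, rfl⟩ : ∃ r, q = r + 1 := ⟨q - 1, by omega⟩
  rw [Nat.add_sub_cancel] at hΔ
  rw [mul_add_one] at h1
  refine Nat.le_of_mul_le_mul_right ?_ (by omega : 0 < r)
  rw [hΔ, Nat.succ_mul]
  omega

theorem Set.ncard_image_mul_of_ncard_fiber_eq {α β : Type*} {s : Set α} (hs : s.Finite)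
    {f : α → β} {n : ℕ} (h : ∀ a ∈ s, {b ∈ s | f b = f a}.ncard = n) :
    (f '' s).ncard * n = s.ncard := by
  classical
  obtain ⟨t, rfl⟩ := hs.exists_finset_coe
  have hfiber : ∀ b ∈ t.image f, (t.filter (f · = b)).card = n := by
    intro b hb
    obtain ⟨a, ha, rfl⟩ := Finset.mem_image.mp hb
    rw [← h a ha, ← Set.ncard_coe_finset, Finset.coe_filter]
    rfl
  rw [← Finset.coe_image, Set.ncard_coe_finset, Set.ncard_coe_finset, mul_comm]
  exact le_antisymm (Finset.mul_card_image_le_card t n fun b hb => (hfiber b hb).ge)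
    (Finset.card_le_mul_card_image t n fun b hb => (hfiber b hb).le)

section Group

variable {G : Type*} [Group G] {γ : G}

theorem exists_pow_eq_zpow_of_isCoprime {a c : ℕ} (hγ : orderOf γ = a * c)
    (hfin : IsOfFinOrder γ) {e : ℤ} (he : IsCoprime (a : ℤ) e) :
    ∃ m < orderOf γ, a.Coprime m ∧ γ ^ m = γ ^ e := by
  have hpos : (0 : ℤ) < orderOf γ := by exact_mod_cast hfin.orderOf_pos
  have hnonneg := Int.emod_nonneg e hpos.ne'
  have hlt := Int.emod_lt_of_pos e hpos
  refine ⟨(e % orderOf γ).toNat, by omega, ?_, ?_⟩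
  · have hmod : e % orderOf γ = e + a * (c * -(e / orderOf γ)) := by
      rw [Int.emod_def, hγ]; push_cast; ring
    rw [← Nat.isCoprime_iff_coprime, Int.toNat_of_nonneg hnonneg, hmod]
    exact he.add_mul_left_right _
  · rw [← zpow_natCast, Int.toNat_of_nonneg hnonneg, zpow_mod_orderOf]

theorem ncard_setOf_zpow_isCoprime {a c : ℕ} (hγ : orderOf γ = a * c)
    (hfin : IsOfFinOrder γ) :
    {x : G | ∃ e : ℤ, IsCoprime (a : ℤ) e ∧ x = γ ^ e}.ncard = a.totient * c := by
  have hset : {x : G | ∃ e : ℤ, IsCoprime (a : ℤ) e ∧ x = γ ^ e}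
      = (γ ^ ·) '' {m : ℕ | m < orderOf γ ∧ a.Coprime m} := by
    ext x
    constructor
    · rintro ⟨e, he, rfl⟩
      obtain ⟨m, hm, hcop, heq⟩ := exists_pow_eq_zpow_of_isCoprime hγ hfin he
      exact ⟨m, ⟨hm, hcop⟩, heq⟩
    · rintro ⟨m, ⟨-, hm⟩, rfl⟩
      exact ⟨m, Nat.isCoprime_iff_coprime.mpr hm, (zpow_natCast γ m).symm⟩
  rw [hset, (pow_injOn_Iio_orderOf.mono fun m hm => hm.1).ncard_image, hγ,
    ← Nat.count_coprime_mul, Nat.count_eq_card_filter_range, ← Set.ncard_coe_finset]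
  congr 1
  ext m
  simp

theorem dvd_orderOf_zpow_of_isCoprime {a : ℕ} (ha : a ∣ orderOf γ) {e : ℤ}
    (he : IsCoprime (a : ℤ) e) : a ∣ orderOf (γ ^ e) := by
  have h : (orderOf γ : ℤ) ∣ e * orderOf (γ ^ e) := by
    rw [orderOf_dvd_iff_zpow_eq_one, zpow_mul, zpow_natCast, pow_orderOf_eq_one]
  exact Int.natCast_dvd_natCast.mp
    (he.dvd_of_dvd_mul_left ((Int.natCast_dvd_natCast.mpr ha).trans h))

theorem setOf_gcd_eq_one_zpow_neg_eq_image {β : Type*} (a : ℕ) (g : G → β) :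
    {b : β | ∃ e : ℤ, Int.gcd (a : ℤ) e = 1 ∧ b = g (γ ^ (-e))}
      = g '' {x : G | ∃ e : ℤ, IsCoprime (a : ℤ) e ∧ x = γ ^ e} := by
  ext b
  constructor
  · rintro ⟨e, he, rfl⟩
    exact ⟨γ ^ (-e), ⟨-e, (Int.isCoprime_iff_gcd_eq_one.mpr he).neg_right, rfl⟩, rfl⟩
  · rintro ⟨_, ⟨e, he, rfl⟩, rfl⟩
    exact ⟨-e, by rwa [Int.gcd_neg, ← Int.isCoprime_iff_gcd_eq_one], by rw [neg_neg]⟩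

end Group

theorem injOn_pow_pow_of_not_modEq {M : Type*} [LeftCancelMonoid M] {x : M} {q n : ℕ}
    (hq : (orderOf x).Coprime q) (h : ∀ d, 0 < d → d < n → ¬ q ^ d ≡ 1 [MOD orderOf x]) :
    Set.InjOn (fun i => x ^ q ^ i) (Set.Iio n) := by
  have key : ∀ i j, i < j → j < n → x ^ q ^ i ≠ x ^ q ^ j := by
    intro i j hij hjn heq
    have hpow : (x ^ q ^ i) ^ q ^ (j - i) = (x ^ q ^ i) ^ 1 := by
      rw [pow_one, ← pow_mul, ← pow_add, Nat.add_sub_cancel' hij.le, heq]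
    have hmod := pow_eq_pow_iff_modEq.mp hpow
    rw [(hq.pow_right i).orderOf_pow] at hmod
    exact h (j - i) (by omega) (by omega) hmod
  intro i hi j hj hij
  rcases lt_trichotomy i j with h | h | h
  · exact absurd hij (key i j h hj)
  · exact h
  · exact absurd hij.symm (key j i h hi)

theorem injOn_pow_pow_of_dvd_orderOf {M : Type*} [LeftCancelMonoid M] {x : M} {q k Δ : ℕ}
    (hq : 2 ≤ q) (hk : 1 ≤ k) (hΔ : Δ * (q - 1) = q ^ k - 1) (hΔx : Δ ∣ orderOf x)
    (hx : orderOf x ∣ q ^ k - 1) : Set.InjOn (fun i => x ^ q ^ i) (Set.Iio k) := by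
  have hcop := (Nat.coprime_pow_sub_one_self (by omega) (by omega)).coprime_dvd_left hx
  refine injOn_pow_pow_of_not_modEq hcop fun d hd hdk hmod => ?_
  have hlt := Nat.pow_lt_of_mul_sub_one_eq hq hΔ hd hdk
  have h1 : q ^ d % Δ = 1 % Δ := hmod.of_dvd hΔx
  have h2 := Nat.le_self_pow hd.ne' q
  rw [Nat.mod_eq_of_lt hlt, Nat.mod_eq_of_lt (by omega)] at h1
  omega

theorem minpoly_pow_card_pow (F : Type*) {E : Type*} [Field F] [Fintype F] [Field E]
    [Algebra F E] [Algebra.IsAlgebraic F E] (x : E) (i : ℕ) :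
    minpoly F (x ^ Fintype.card F ^ i) = minpoly F x := by
  have h := minpoly.algEquiv_eq (FiniteField.frobeniusAlgEquivOfAlgebraic F E ^ i) x
  rwa [AlgEquiv.coe_pow, FiniteField.coe_frobeniusAlgEquivOfAlgebraic_iterate] at h

theorem ncard_minpoly_fiber_eq_finrank {F E : Type*} [Field F] [Fintype F] [Field E]
    [Finite E] [Algebra F E] {T : Set Eˣ} (hT : ∀ y ∈ T, y ^ Fintype.card F ∈ T) {x : Eˣ}
    (hx : x ∈ T)
    (hinj : Set.InjOn (fun i => x ^ Fintype.card F ^ i) (Set.Iio (Module.finrank F E))) :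
    {y ∈ T | minpoly F (y : E) = minpoly F (x : E)}.ncard = Module.finrank F E := by
  have : Module.Finite F E := Module.Finite.of_finite
  have hint : IsIntegral F (x : E) := Algebra.IsIntegral.isIntegral _
  have horbit : ∀ i, x ^ Fintype.card F ^ i ∈ T := by
    intro i
    induction i with
    | zero => simpa using hx
    | succ i ih => simpa [pow_succ, pow_mul] using hT _ ih
  refine le_antisymm ?_ ?_
  · calc {y ∈ T | minpoly F (y : E) = minpoly F (x : E)}.ncard
        ≤ ((minpoly F (x : E)).rootSet E).ncard := by
          refine Set.ncard_le_ncard_of_injOn (fun y => (y : E)) ?_ (fun _ _ _ _ => Units.ext)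
          rintro y ⟨-, hy⟩
          rw [Polynomial.mem_rootSet, ← hy]
          exact ⟨hy ▸ minpoly.ne_zero hint, minpoly.aeval F _⟩
      _ ≤ (minpoly F (x : E)).natDegree := Polynomial.ncard_rootSet_le _ _
      _ ≤ Module.finrank F E := minpoly.natDegree_le _
  · rw [← Set.ncard_Iio_nat (Module.finrank F E)]
    refine Set.ncard_le_ncard_of_injOn _ (fun i _ => ⟨horbit i, ?_⟩) hinj
    simp only [Units.val_pow_eq_pow_val, minpoly_pow_card_pow]

/-- The number of distinct minimal polynomials over `F_q` of the elements `γ^{−e}` with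
`gcd(Δ, e) = 1` equals `φ(Δ)·(q − 1)/k`. -/
theorem count_minimal_polynomials
    (q k : ℕ) (hk : 1 ≤ k)
    (F E : Type*) [Field F] [Fintype F] [Field E] [Fintype E] [Algebra F E]
    (hcard : Fintype.card F = q) (hE : Fintype.card E = q ^ k)
    (γ : Eˣ) (hγ : ∀ x : Eˣ, x ∈ Subgroup.zpowers γ)
    (Δ : ℕ) (hΔ : Δ * (q - 1) = q ^ k - 1) :
    {h : Polynomial F | ∃ e : ℤ,
        Int.gcd (Δ : ℤ) e = 1 ∧ h = minpoly F ((γ ^ (-e) : Eˣ) : E)}.ncard * k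
      = Nat.totient Δ * (q - 1) := by
  have hq : 2 ≤ q := hcard ▸ Fintype.one_lt_card
  have hfinrank : Module.finrank F E = k :=
    Nat.pow_right_injective hq <| by
      dsimp only; rw [← hcard, ← Module.card_eq_pow_finrank, hE, hcard]
  have hunits : Nat.card Eˣ = q ^ k - 1 := by rw [Nat.card_units, Nat.card_eq_fintype_card, hE]
  have horder : orderOf γ = Δ * (q - 1) := by
    rw [orderOf_eq_card_of_forall_mem_zpowers hγ, hunits, hΔ]
  have hΔq : IsCoprime (Δ : ℤ) q := Nat.isCoprime_iff_coprime.mpr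
    ((Nat.coprime_pow_sub_one_self (by omega) (by omega)).coprime_dvd_left ⟨q - 1, hΔ.symm⟩)
  set T : Set Eˣ := {x | ∃ e : ℤ, IsCoprime (Δ : ℤ) e ∧ x = γ ^ e}
  have hfiber : ∀ x ∈ T, {y ∈ T | minpoly F (y : E) = minpoly F (x : E)}.ncard = k := by
    rintro _ ⟨e, he, rfl⟩
    rw [← hfinrank]
    refine ncard_minpoly_fiber_eq_finrank ?_ ⟨e, he, rfl⟩ ?_
    · rintro _ ⟨e', he', rfl⟩
      exact ⟨e' * q, he'.mul_right hΔq, by rw [hcard, zpow_mul, zpow_natCast]⟩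
    · rw [hcard, hfinrank]
      exact injOn_pow_pow_of_dvd_orderOf hq hk hΔ
        (dvd_orderOf_zpow_of_isCoprime ⟨_, horder⟩ he) (hunits ▸ orderOf_dvd_natCard _)
  rw [setOf_gcd_eq_one_zpow_neg_eq_image Δ (fun x : Eˣ => minpoly F (x : E)),
    Set.ncard_image_mul_of_ncard_fiber_eq (Set.toFinite T) hfiber,
    ncard_setOf_zpow_isCoprime horder (isOfFinOrder_of_finite γ)]
end

section
/- Let n ≥ 1 be an integer, and let k and e be integers such that gcd(gcd(k, n), e) = 1. Then the number of integers x with 0 ≤ x < n and gcd(n, k·x − e) = 1 equals φ(n)·d/φ(d), where d = gcd(k, n) and φ is the Euler totient function. (Applied with n = q − 1, k the extension degree, and e = e₂, this counts the choices of e₁ modulo q − 1 with gcd(q − 1, k·e₁ − e₂) = 1 in Theorem 5.) -/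
/-!
Multiplication by `k` on `ZMod n` has as image the kernel of reduction modulo `d = gcd(k, n)`,
and each of its fibres has `d` elements. Hence `z ↦ k z - e` takes every value `w` with
`w ≡ -e (mod d)` exactly `d` times, and the count is `d` times the number of units of `ZMod n`
lying over the unit `-e` of `ZMod d`. Reduction `(ZMod n)ˣ → (ZMod d)ˣ` is a surjective
homomorphism, so that fibre has `φ(n) / φ(d)` elements.
-/

theorem Int.gcd_dvd_natCast_right (k : ℤ) (n : ℕ) : k.gcd n ∣ n :=
  Int.gcd_dvd_natAbs_right k n

@[to_additive]
theorem MonoidHom.natCard_preimage {G H : Type*} [Group G] [Group H] (f : G →* H)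
    (s : Set H) : Nat.card (f ⁻¹' s) = Nat.card f.ker * Nat.card ↑(s ∩ Set.range f) := by
  let e := QuotientGroup.quotientKerEquivRange f
  have hpre : f ⁻¹' s = QuotientGroup.mk ⁻¹' (e ⁻¹' (Subtype.val ⁻¹' s)) := rfl
  rw [hpre, Nat.card_congr (QuotientGroup.preimageMkEquivSubgroupProdSet _ _), Nat.card_prod,
    Nat.card_preimage_of_injective e.injective (by simp [e.surjective.range_eq]),
    ← Set.preimage_inter_range, Nat.card_preimage_of_injective Subtype.val_injective (by simp),
    Subtype.range_coe, coe_range]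

namespace ZMod

variable {n : ℕ}

theorem isUnit_intCast_iff_gcd_eq_one (a : ℤ) : IsUnit (a : ZMod n) ↔ Int.gcd n a = 1 :=
  (coe_int_isUnit_iff_isCoprime a n).trans Int.isCoprime_iff_gcd_eq_one

theorem ncard_setOf_nonneg_lt_intCast [NeZero n] (P : ZMod n → Prop) :
    {x : ℤ | 0 ≤ x ∧ x < n ∧ P x}.ncard = Nat.card {z | P z} := by
  have himage :
      {x : ℤ | 0 ≤ x ∧ x < n ∧ P x} = (fun z : ZMod n ↦ (z.val : ℤ)) '' {z | P z} := by
    ext x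
    constructor
    · rintro ⟨hx0, hxn, hP⟩
      refine ⟨x, hP, ?_⟩
      beta_reduce
      rw [val_intCast, Int.emod_eq_of_lt hx0 hxn]
    · rintro ⟨z, hP, rfl⟩
      refine ⟨Int.natCast_nonneg _, Int.ofNat_lt.mpr z.val_lt, ?_⟩
      rwa [Int.cast_natCast, natCast_zmod_val]
  rw [himage, Set.ncard_image_of_injective _ fun a b h ↦ val_injective n (Int.ofNat_inj.mp h),
    Nat.card_coe_set_eq]

theorem exists_intCast_mul_eq_iff (k : ℤ) (w : ZMod n) :
    (∃ z, (k : ZMod n) * z = w) ↔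
      castHom (k.gcd_dvd_natCast_right n) (ZMod (k.gcd n)) w = 0 := by
  obtain ⟨a, rfl⟩ := intCast_surjective w
  rw [map_intCast, intCast_zmod_eq_zero_iff_dvd]
  constructor
  · rintro ⟨z, hz⟩
    obtain ⟨b, rfl⟩ := intCast_surjective z
    rw [← Int.cast_mul, intCast_eq_intCast_iff_dvd_sub] at hz
    simpa using dvd_add ((Int.gcd_dvd_right k n).trans hz) ((Int.gcd_dvd_left k n).mul_right b)
  · rintro ⟨u, rfl⟩
    refine ⟨(k.gcdA n : ZMod n) * u, ?_⟩
    rw [Int.gcd_eq_gcd_ab]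
    push_cast [natCast_self]
    ring

theorem card_ker_mulLeft_intCast [NeZero n] (k : ℤ) :
    Nat.card (AddMonoidHom.mulLeft (k : ZMod n)).ker = k.gcd n := by
  let π := (castHom (k.gcd_dvd_natCast_right n) (ZMod (k.gcd n))).toAddMonoidHom
  have hπ_surj : Function.Surjective π := castHom_surjective (k.gcd_dvd_natCast_right n)
  have hrange : Set.range (AddMonoidHom.mulLeft (k : ZMod n)) = π.ker :=
    Set.ext (exists_intCast_mul_eq_iff k)
  have hmul := (AddMonoidHom.mulLeft (k : ZMod n)).natCard_preimage Set.univ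
  have hπ := π.natCard_preimage Set.univ
  rw [Set.univ_inter, hrange] at hmul
  rw [Set.univ_inter, hπ_surj.range_eq] at hπ
  simp only [Set.preimage_univ, Nat.card_univ, Nat.card_zmod] at hmul hπ
  exact Nat.eq_of_mul_eq_mul_right Nat.card_pos (hmul.symm.trans (hπ.trans (mul_comm _ _)))

theorem card_isUnit_intCast_mul_sub [NeZero n] (k e : ℤ) :
    Nat.card {z : ZMod n | IsUnit ((k : ZMod n) * z - e)} = k.gcd n * Nat.card
      {u : ZMod n | IsUnit u ∧ castHom (k.gcd_dvd_natCast_right n) (ZMod (k.gcd n)) u = -e} := by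
  have hshift : {w : ZMod n | IsUnit (w - e)} ∩ Set.range (AddMonoidHom.mulLeft (k : ZMod n)) =
      (· - (e : ZMod n)) ⁻¹' {u | IsUnit u ∧
        castHom (k.gcd_dvd_natCast_right n) (ZMod (k.gcd n)) u = -e} := by
    ext w
    simp only [Set.mem_inter_iff, Set.mem_ofPred_eq, Set.mem_preimage, Set.mem_range,
      AddMonoidHom.coe_mulLeft, exists_intCast_mul_eq_iff, map_sub, map_intCast, sub_eq_neg_self]
  have h := (AddMonoidHom.mulLeft (k : ZMod n)).natCard_preimage {w | IsUnit (w - e)}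
  rwa [card_ker_mulLeft_intCast, hshift, Nat.card_preimage_of_injective (f := (· - (e : ZMod n)))
    sub_left_injective fun u _ ↦ ⟨u + e, add_sub_cancel_right u e⟩] at h

theorem card_isUnit_and_castHom_eq_mul_totient [NeZero n] {d : ℕ} (hd : d ∣ n) {c : ZMod d}
    (hc : IsUnit c) :
    Nat.card {u : ZMod n | IsUnit u ∧ castHom hd (ZMod d) u = c} * d.totient = n.totient := by
  have : NeZero d := ⟨fun h ↦ NeZero.ne n (Nat.eq_zero_of_zero_dvd (h ▸ hd))⟩
  have himage : {u : ZMod n | IsUnit u ∧ castHom hd (ZMod d) u = c} =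
      Units.val '' (unitsMap hd ⁻¹' {hc.unit}) := by
    ext u
    constructor
    · rintro ⟨hu, hπu⟩
      refine ⟨hu.unit, Units.ext ?_, hu.unit_spec⟩
      simpa [unitsMap_def] using hπu
    · rintro ⟨u, hu, rfl⟩
      refine ⟨u.isUnit, ?_⟩
      simpa [unitsMap_def, Units.ext_iff] using hu
  have hfiber := (unitsMap hd).natCard_preimage {hc.unit}
  have htotal := (unitsMap hd).natCard_preimage Set.univ
  rw [(unitsMap_surjective hd).range_eq, Set.inter_univ] at hfiber htotal
  rw [Set.preimage_univ, Nat.card_univ, Nat.card_univ] at htotal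
  rw [himage, Nat.card_image_of_injective Units.val_injective, hfiber,
    Nat.card_unique (α := ({hc.unit} : Set (ZMod d)ˣ)), mul_one,
    ← card_units_eq_totient, ← card_units_eq_totient, ← Nat.card_eq_fintype_card,
    ← Nat.card_eq_fintype_card, htotal]

end ZMod

/-- If `gcd(gcd(k, n), e) = 1`, then the number of integers `x` with `0 ≤ x < n` and
`gcd(n, k·x − e) = 1` equals `φ(n)·d/φ(d)`, where `d = gcd(k, n)`. -/
theorem count_coprime_linear
    (n : ℕ) (hn : 1 ≤ n) (k e : ℤ)
    (hke : Int.gcd (Int.gcd k (n : ℤ) : ℤ) e = 1) :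
    {x : ℤ | 0 ≤ x ∧ x < (n : ℤ) ∧ Int.gcd (n : ℤ) (k * x - e) = 1}.ncard
        * Nat.totient (Int.gcd k (n : ℤ))
      = Nat.totient n * Int.gcd k (n : ℤ) := by
  have : NeZero n := ⟨by omega⟩
  have hset : {x : ℤ | 0 ≤ x ∧ x < n ∧ Int.gcd n (k * x - e) = 1} =
      {x : ℤ | 0 ≤ x ∧ x < n ∧ IsUnit ((k : ZMod n) * x - e)} := by
    simp_rw [← ZMod.isUnit_intCast_iff_gcd_eq_one, Int.cast_sub, Int.cast_mul]
  have hunit : IsUnit (-(e : ZMod (k.gcd n))) :=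
    ((ZMod.isUnit_intCast_iff_gcd_eq_one e).mpr hke).neg
  rw [hset, ZMod.ncard_setOf_nonneg_lt_intCast (fun z : ZMod n ↦ IsUnit (k * z - e)),
    ZMod.card_isUnit_intCast_mul_sub, mul_assoc,
    ZMod.card_isUnit_and_castHom_eq_mul_totient _ hunit, mul_comm]
end
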